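/- arXiv:1903.00693 — 13 statements merged into one kernel-verified Lean document; each statement's English description precedes it below -/
import Mathlib

section
/- Let X be a compact Hausdorff space and ν an upper-semicontinuous capacity on X. Then ν is a possibility capacity (i.e., ν(⋃_{t∈T} A_t) = sup_t ν(A_t) for every family of closed sets with closed union) if and only if ν(A ∪ B) = max{ν(A), ν(B)} for all closed sets A, B ⊆ X. -/
open Set TopologicalSpace

/-- An upper-semicontinuous capacity on a topological space `X`:
a monotone set function on closed sets with values in `[0,1]`,
`ν ∅ = 0`, `ν X = 1`, and upper semicontinuity. -/
structure Capacity (X : Type*) [TopologicalSpace X] where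
  toFun : Set X → ℝ
  nonneg : ∀ A : Set X, 0 ≤ toFun A
  le_one : ∀ A : Set X, toFun A ≤ 1
  empty' : toFun ∅ = 0
  univ' : toFun Set.univ = 1
  mono : ∀ ⦃A B : Set X⦄, IsClosed A → IsClosed B → A ⊆ B → toFun A ≤ toFun B
  usc : ∀ ⦃F : Set X⦄ ⦃a : ℝ⦄, IsClosed F → toFun F < a →
    ∃ U : Set X, IsOpen U ∧ F ⊆ U ∧ ∀ ⦃K : Set X⦄, IsCompact K → K ⊆ U → toFun K < a

/-- `ν` is a possibility capacity: `ν (A ∪ B) = max (ν A) (ν B)` for closed `A`, `B`. -/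
def IsPossibility {X : Type*} [TopologicalSpace X] (ν : Capacity X) : Prop :=
  ∀ ⦃A B : Set X⦄, IsClosed A → IsClosed B →
    ν.toFun (A ∪ B) = max (ν.toFun A) (ν.toFun B)

private lemma finset_union_lt {X : Type*} [TopologicalSpace X] [T2Space X] (ν : Capacity X)
    (h : ∀ A B : Set X, IsClosed A → IsClosed B →
        ν.toFun (A ∪ B) = max (ν.toFun A) (ν.toFun B))
    {T : Type} (K : T → Set X) (hK : ∀ i, IsCompact (K i)) {a : ℝ} (ha : 0 < a)
    (hlt : ∀ i, ν.toFun (K i) < a) (s : Finset T) :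
    ν.toFun (⋃ i ∈ s, K i) < a := by
  classical
  induction s using Finset.induction_on with
  | empty => simpa [ν.empty'] using ha
  | @insert j s hj ih =>
    rw [Finset.set_biUnion_insert]
    have hcl : IsClosed (⋃ i ∈ s, K i) := by
      apply Set.Finite.isClosed_biUnion s.finite_toSet
      exact fun i _ => (hK i).isClosed
    rw [h _ _ (hK j).isClosed hcl]
    exact max_lt (hlt j) ih

/-- A capacity on a compactum is a possibility capacity (sup over any closed family
with closed union) iff it is finitely maxitive on closed sets. -/
theorem stmt0 {X : Type*} [TopologicalSpace X] [CompactSpace X] [T2Space X]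
    (ν : Capacity X) :
    (∀ (T : Type) (A : T → Set X), (∀ t, IsClosed (A t)) → IsClosed (⋃ t, A t) →
        ν.toFun (⋃ t, A t) = ⨆ t, ν.toFun (A t)) ↔
    (∀ A B : Set X, IsClosed A → IsClosed B →
        ν.toFun (A ∪ B) = max (ν.toFun A) (ν.toFun B)) := by
  constructor
  · intro h A B hA hB
    have key := h Bool (fun b => cond b A B) (by rintro (_ | _) <;> simpa) (by
      rw [← Set.union_eq_iUnion]; exact hA.union hB)
    rw [← Set.union_eq_iUnion] at key
    rw [key]
    apply le_antisymm
    · apply ciSup_le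
      rintro (_ | _)
      · exact le_max_right _ _
      · exact le_max_left _ _
    · have hbdd : BddAbove (Set.range fun b => ν.toFun (cond b A B)) :=
        (Set.finite_range _).bddAbove
      apply max_le
      · exact le_ciSup hbdd true
      · exact le_ciSup hbdd false
  · intro h T A hA hcl
    rcases isEmpty_or_nonempty T with hT | hT
    · simp [Set.iUnion_of_empty, ν.empty', Real.iSup_of_isEmpty]
    have hsub : ∀ t, A t ⊆ ⋃ t, A t := fun t => Set.subset_iUnion A t
    have hle : ∀ t, ν.toFun (A t) ≤ ν.toFun (⋃ t, A t) :=
      fun t => ν.mono (hA t) hcl (hsub t)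
    have hsup_le : (⨆ t, ν.toFun (A t)) ≤ ν.toFun (⋃ t, A t) := ciSup_le hle
    refine le_antisymm ?_ hsup_le
    by_contra hgt
    push_neg at hgt
    set a := ν.toFun (⋃ t, A t) with ha
    set s := ⨆ t, ν.toFun (A t) with hs
    have hbdd : BddAbove (Set.range fun t => ν.toFun (A t)) :=
      ⟨1, by rintro x ⟨t, rfl⟩; exact ν.le_one _⟩
    have hlt : ∀ t, ν.toFun (A t) < a :=
      fun t => lt_of_le_of_lt (le_ciSup hbdd t) hgt
    -- choose open neighborhoods via usc
    have hU : ∀ t, ∃ U : Set X, IsOpen U ∧ A t ⊆ U ∧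
        ∀ ⦃K : Set X⦄, IsCompact K → K ⊆ U → ν.toFun K < a :=
      fun t => ν.usc (hA t) (hlt t)
    choose U hUopen hUsub hUlt using hU
    have hFcomp : IsCompact (⋃ t, A t) := hcl.isCompact
    have hcover : (⋃ t, A t) ⊆ ⋃ t, U t :=
      Set.iUnion_mono fun t => hUsub t
    obtain ⟨fs, hfs⟩ := hFcomp.elim_finite_subcover U hUopen hcover
    obtain ⟨K, hKcomp, hKsub, hKeq⟩ :=
      hFcomp.finite_compact_cover fs U (fun i _ => hUopen i) hfs
    have ha0 : 0 < a := lt_of_le_of_lt (by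
      obtain ⟨t⟩ := hT
      exact le_trans (ν.nonneg (A t)) (le_ciSup hbdd t)) hgt
    have hKlt : ∀ i, i ∈ fs → ν.toFun (K i) < a := fun i hi =>
      hUlt i (hKcomp i) (hKsub i)
    -- restrict to indices in fs: define K' zeroing out outside
    classical
    set K' : T → Set X := fun i => if i ∈ fs then K i else ∅ with hK'
    have hK'comp : ∀ i, IsCompact (K' i) := fun i => by
      by_cases hi : i ∈ fs <;> simp [hK', hi, hKcomp i, isCompact_empty]
    have hK'lt : ∀ i, ν.toFun (K' i) < a := fun i => by
      by_cases hi : i ∈ fs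
      · simpa [hK', hi] using hKlt i hi
      · simpa [hK', hi, ν.empty'] using ha0
    have hunion : (⋃ i ∈ fs, K' i) = ⋃ i ∈ fs, K i := by
      apply Set.iUnion₂_congr
      intro i hi
      simp [hK', hi]
    have := finset_union_lt ν h K' hK'comp ha0 hK'lt fs
    rw [hunion, ← hKeq] at this
    exact lt_irrefl _ this
end

section
/- Let X be a compact Hausdorff space, and let 𝔄 be a possibility capacity on the space M_∪X of possibility capacities on X. Define μ•(𝔄)(F) = sup{𝔄(F_t) · t : t ∈ (0,1]} for closed F ⊆ X, where F_t = {c ∈ M_∪X : c(F) ≥ t}. Then μ•(𝔄) is itself a possibility capacity on X, i.e., μ•(𝔄)(B ∪ C) = max{μ•(𝔄)(B), μ•(𝔄)(C)} for all closed B, C ⊆ X. -/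
open Set TopologicalSpace

noncomputable def capExt {X : Type*} [TopologicalSpace X] (m : Set X → ℝ) (U : Set X) : ℝ :=
  sSup (m '' {K : Set X | IsClosed K ∧ K ⊆ U})

/-- The space of possibility capacities on X. -/
def PosCap (X : Type*) [TopologicalSpace X] := {f : Capacity X // IsPossibility f}

/-- The topology on the space of possibility capacities, generated by the subbase
of sets of capacities small on a given closed set or large on a given open set. -/
instance instTopPosCap (X : Type*) [TopologicalSpace X] : TopologicalSpace (PosCap X) :=
  TopologicalSpace.generateFrom
    ({S | ∃ (F : Set X) (a : ℝ), IsClosed F ∧ S = {c : PosCap X | c.1.toFun F < a}} ∪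
     {S | ∃ (U : Set X) (a : ℝ), IsOpen U ∧ S = {c : PosCap X | a < capExt c.1.toFun U}})

lemma closed_Ft {X : Type*} [TopologicalSpace X] (F : Set X) (hF : IsClosed F) (t : ℝ) :
    IsClosed {c : PosCap X | t ≤ c.1.toFun F} := by
  rw [← isOpen_compl_iff]
  have h : {c : PosCap X | t ≤ c.1.toFun F}ᶜ = {c : PosCap X | c.1.toFun F < t} := by
    ext c; simp [not_le]
  rw [h]
  exact TopologicalSpace.GenerateOpen.basic _ (Or.inl ⟨F, t, hF, rfl⟩)

lemma sSup_max_img {S : Set ℝ} (hne : S.Nonempty) {f g : ℝ → ℝ}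
    (hf : BddAbove (f '' S)) (hg : BddAbove (g '' S)) :
    sSup ((fun t => max (f t) (g t)) '' S) = max (sSup (f '' S)) (sSup (g '' S)) := by
  have hm : BddAbove ((fun t => max (f t) (g t)) '' S) := by
    obtain ⟨a, ha⟩ := hf; obtain ⟨b, hb⟩ := hg
    refine ⟨max a b, ?_⟩
    rintro x ⟨t, ht, rfl⟩
    exact max_le_max (ha ⟨t, ht, rfl⟩) (hb ⟨t, ht, rfl⟩)
  apply le_antisymm
  · apply csSup_le (hne.image _)
    rintro x ⟨t, ht, rfl⟩
    exact max_le_max (le_csSup hf ⟨t, ht, rfl⟩) (le_csSup hg ⟨t, ht, rfl⟩)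
  · refine max_le ?_ ?_
    · apply csSup_le (hne.image _)
      rintro x ⟨t, ht, rfl⟩
      exact le_trans (le_max_left _ _) (le_csSup hm ⟨t, ht, rfl⟩)
    · apply csSup_le (hne.image _)
      rintro x ⟨t, ht, rfl⟩
      exact le_trans (le_max_right _ _) (le_csSup hm ⟨t, ht, rfl⟩)

/-- The max-product multiplication of a possibility capacity on the space of
possibility capacities is again a possibility capacity. -/
theorem stmt3 {X : Type*} [TopologicalSpace X] [CompactSpace X] [T2Space X]
    (A : Capacity (PosCap X)) (hA : IsPossibility A) :
    ∀ B C : Set X, IsClosed B → IsClosed C →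
      sSup ((fun t => A.toFun {c : PosCap X | t ≤ c.1.toFun (B ∪ C)} * t) '' Set.Ioc (0:ℝ) 1)
        = max
          (sSup ((fun t => A.toFun {c : PosCap X | t ≤ c.1.toFun B} * t) '' Set.Ioc (0:ℝ) 1))
          (sSup ((fun t => A.toFun {c : PosCap X | t ≤ c.1.toFun C} * t) '' Set.Ioc (0:ℝ) 1)) := by
  intro B C hB hC
  have hset : ∀ t : ℝ, {c : PosCap X | t ≤ c.1.toFun (B ∪ C)}
      = {c : PosCap X | t ≤ c.1.toFun B} ∪ {c : PosCap X | t ≤ c.1.toFun C} := by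
    intro t
    ext c
    simp only [Set.mem_setOf_eq, Set.mem_union]
    rw [c.2 hB hC, le_max_iff]
  have hbdd : ∀ F : Set X, BddAbove ((fun t => A.toFun {c : PosCap X | t ≤ c.1.toFun F} * t) '' Set.Ioc (0:ℝ) 1) := by
    intro F
    refine ⟨1, ?_⟩
    rintro x ⟨t, ht, rfl⟩
    exact mul_le_one₀ (A.le_one _) ht.1.le ht.2
  have heq : ∀ t ∈ Set.Ioc (0:ℝ) 1,
      A.toFun {c : PosCap X | t ≤ c.1.toFun (B ∪ C)} * t
      = max (A.toFun {c : PosCap X | t ≤ c.1.toFun B} * t)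
            (A.toFun {c : PosCap X | t ≤ c.1.toFun C} * t) := by
    intro t ht
    rw [hset t, hA (closed_Ft B hB t) (closed_Ft C hC t), max_mul_of_nonneg _ _ ht.1.le]
  rw [Set.image_congr heq]
  exact sSup_max_img (Set.nonempty_Ioc.mpr one_pos) (hbdd B) (hbdd C)
end

section
/- Let X be a compact Hausdorff space, x ∈ X, and let η(x) be the Dirac capacity: η(x)(F) = 1 if x ∈ F and 0 otherwise. Let η'(x) = η_{M_∪X}(η(x)) be the Dirac capacity on M_∪X at the point η(x). Then for every closed F ⊆ X, sup{η'(x)(F_t) · t : t ∈ (0,1]} = η(x)(F), where F_t = {c ∈ M_∪X : c(F) ≥ t}. (Left unit law: μ• ∘ η M_∪ = id.) -/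
open Set TopologicalSpace
open scoped Classical

/-- Left unit law: evaluating μ• at the Dirac capacity on the space of possibility
capacities concentrated at the Dirac capacity η(x) returns η(x). -/
theorem stmt5 {X : Type*} [TopologicalSpace X] [CompactSpace X] [T2Space X]
    (x : X) (d : PosCap X) (hd : ∀ F : Set X, d.1.toFun F = if x ∈ F then 1 else 0) :
    ∀ F : Set X, IsClosed F →
      sSup ((fun t => (if d ∈ {c : PosCap X | t ≤ c.1.toFun F} then (1:ℝ) else 0) * t)
          '' Set.Ioc (0:ℝ) 1)
        = d.1.toFun F := by
  intro F hF
  conv_rhs => rw [hd F]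
  by_cases hx : x ∈ F
  · simp only [hx, if_true]
    have himg : ((fun t => (if d ∈ {c : PosCap X | t ≤ c.1.toFun F} then (1:ℝ) else 0) * t)
        '' Set.Ioc (0:ℝ) 1) = Set.Ioc (0:ℝ) 1 := by
      ext y
      constructor
      · rintro ⟨t, ht, rfl⟩
        have : d ∈ {c : PosCap X | t ≤ c.1.toFun F} := by
          simp [Set.mem_setOf_eq, hd, hx, ht.2]
        simpa [this] using ht
      · intro hy
        refine ⟨y, hy, ?_⟩
        have : d ∈ {c : PosCap X | y ≤ c.1.toFun F} := by
          simp [Set.mem_setOf_eq, hd, hx, hy.2]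
        simp [this]
    rw [himg, csSup_Ioc zero_lt_one]
  · simp only [hx, if_false]
    have himg : ((fun t => (if d ∈ {c : PosCap X | t ≤ c.1.toFun F} then (1:ℝ) else 0) * t)
        '' Set.Ioc (0:ℝ) 1) = {(0:ℝ)} := by
      ext y
      constructor
      · rintro ⟨t, ht, rfl⟩
        have : d ∉ {c : PosCap X | t ≤ c.1.toFun F} := by
          simp only [Set.mem_setOf_eq, hd, hx, if_false, not_le]
          exact ht.1
        simp [this]
      · rintro rfl
        refine ⟨1, by norm_num, ?_⟩
        have : d ∉ {c : PosCap X | (1:ℝ) ≤ c.1.toFun F} := by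
          simp [Set.mem_setOf_eq, hd, hx]
        simp [this]
    rw [himg, csSup_singleton]
end

section
/- Let X be a compact Hausdorff space and ν a possibility capacity on X. Let 𝔄 = M_∪(η X)(ν) be the image capacity on M_∪X defined by 𝔄(Φ) = ν((ηX)^{-1}(Φ)) for closed Φ ⊆ M_∪X, where ηX(x) is the Dirac capacity at x. Then for every closed F ⊆ X, sup{𝔄(F_t) · t : t ∈ (0,1]} = ν(F). (Right unit law: μ• ∘ M_∪η = id.) -/
open Set TopologicalSpace
open scoped Classical

/-- Right unit law: μ•(M_∪(ηX)(ν)) = ν for a possibility capacity ν, where ηX is the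
Dirac embedding and the image capacity is Φ ↦ ν(ηX⁻¹(Φ)). -/
theorem stmt6 {X : Type*} [TopologicalSpace X] [CompactSpace X] [T2Space X]
    (ν : PosCap X) (e : X → PosCap X)
    (he : ∀ (y : X) (F : Set X), (e y).1.toFun F = if y ∈ F then 1 else 0) :
    ∀ F : Set X, IsClosed F →
      sSup ((fun t => ν.1.toFun (e ⁻¹' {c : PosCap X | t ≤ c.1.toFun F}) * t)
          '' Set.Ioc (0:ℝ) 1)
        = ν.1.toFun F := by
  intro F hF
  have himg : ((fun t => ν.1.toFun (e ⁻¹' {c : PosCap X | t ≤ c.1.toFun F}) * t)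
      '' Set.Ioc (0:ℝ) 1) = (fun t => ν.1.toFun F * t) '' Set.Ioc (0:ℝ) 1 := by
    apply Set.image_congr
    intro t ht
    have hset : e ⁻¹' {c : PosCap X | t ≤ c.1.toFun F} = F := by
      ext y
      simp only [Set.mem_preimage, Set.mem_setOf_eq, he]
      constructor
      · intro h
        by_contra hy
        simp only [hy, if_false] at h
        linarith [ht.1]
      · intro h
        simp only [h, if_true]
        exact ht.2
    rw [hset]
  rw [himg]
  apply le_antisymm
  · apply csSup_le (Set.Nonempty.image _ ⟨1, by norm_num⟩)
    rintro x ⟨t, ht, rfl⟩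
    simpa using mul_le_of_le_one_right (ν.1.nonneg F) ht.2
  · apply le_csSup
    · exact ⟨ν.1.toFun F, by rintro x ⟨t, ht, rfl⟩; simpa using mul_le_of_le_one_right (ν.1.nonneg F) ht.2⟩
    · exact ⟨1, by norm_num, by ring⟩
end

section
/- Let X be a compact Hausdorff space and ℷ a possibility capacity on M_∪(M_∪X). Then for every closed A ⊆ X: sup{ℷ((μ•X)^{-1}(A_t)) · t : t ∈ (0,1]} = sup{ sup{ℷ((A_t)_s) · s : s ∈ (0,1]} · t : t ∈ (0,1]}, i.e., μ•X ∘ M_∪(μ•X) = μ•X ∘ μ•(M_∪X) on possibility capacities of third order. Here A_t = {c ∈ M_∪X : c(A) ≥ t}, (A_t)_s = {𝔄 ∈ M_∪(M_∪X) : 𝔄(A_t) ≥ s}, and μ•X(𝔄)(A) = sup{𝔄(A_t)·t : t ∈ (0,1]}. -/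
open Set TopologicalSpace

/-- The max-product multiplication μ•. -/
noncomputable def muStar {X : Type*} [TopologicalSpace X]
    (A : PosCap (PosCap X)) (F : Set X) : ℝ :=
  sSup ((fun t => A.1.toFun {c : PosCap X | t ≤ c.1.toFun F} * t) '' Set.Ioc (0:ℝ) 1)

section Aux
variable {Y : Type*} [TopologicalSpace Y]

lemma posCap_open_lt (F : Set Y) (hF : IsClosed F) (a : ℝ) :
    IsOpen {c : PosCap Y | c.1.toFun F < a} :=
  TopologicalSpace.isOpen_generateFrom_of_mem (Or.inl ⟨F, a, hF, rfl⟩)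

lemma posCap_closed_ge (F : Set Y) (hF : IsClosed F) (a : ℝ) :
    IsClosed {c : PosCap Y | a ≤ c.1.toFun F} := by
  rw [← isOpen_compl_iff]
  have h : {c : PosCap Y | a ≤ c.1.toFun F}ᶜ = {c : PosCap Y | c.1.toFun F < a} := by
    ext c; simp [not_le]
  rw [h]; exact posCap_open_lt F hF a

lemma posCap_union_max (G : Capacity Y) (hG : IsPossibility G) :
    ∀ n : ℕ, 0 < n → ∀ C : ℕ → Set Y, (∀ i, IsClosed (C i)) →
      ∃ i < n, G.toFun (⋃ j ∈ Finset.range n, C j) ≤ G.toFun (C i) := by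
  intro n
  induction n with
  | zero => intro h; omega
  | succ n ih =>
    intro _ C hC
    rcases Nat.eq_zero_or_pos n with h0 | hn
    · subst h0
      refine ⟨0, by omega, ?_⟩
      simp
    · have hcl : IsClosed (⋃ j ∈ Finset.range n, C j) := by
        apply Set.Finite.isClosed_biUnion (Finset.finite_toSet _)
        intro i _; exact hC i
      have hunion : (⋃ j ∈ Finset.range (n+1), C j)
          = (⋃ j ∈ Finset.range n, C j) ∪ C n := by
        simp [Finset.range_add_one, Set.union_comm]
      obtain ⟨i, hi, hle⟩ := ih hn C hC
      rw [hunion, hG hcl (hC n)]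
      rcases le_total (G.toFun (⋃ j ∈ Finset.range n, C j)) (G.toFun (C n)) with h | h
      · exact ⟨n, by omega, max_le h le_rfl⟩
      · exact ⟨i, by omega, max_le hle (h.trans hle)⟩

end Aux
set_option maxHeartbeats 2000000 in
/-- Associativity of μ• on possibility capacities of third order. -/
theorem stmt7 {X : Type*} [TopologicalSpace X] [CompactSpace X] [T2Space X]
    (G : Capacity (PosCap (PosCap X))) (hG : IsPossibility G) :
    ∀ A : Set X, IsClosed A →
      sSup ((fun t => G.toFun {B : PosCap (PosCap X) | t ≤ muStar B A} * t) '' Set.Ioc (0:ℝ) 1)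
        = sSup ((fun t =>
            sSup ((fun s =>
                G.toFun {B : PosCap (PosCap X) | s ≤ B.1.toFun {c : PosCap X | t ≤ c.1.toFun A}}
                  * s) '' Set.Ioc (0:ℝ) 1) * t) '' Set.Ioc (0:ℝ) 1) := by
  intro A hA
  have hASc : ∀ s : ℝ, IsClosed {c : PosCap X | s ≤ c.1.toFun A} :=
    fun s => posCap_closed_ge A hA s
  have hTc : ∀ t s : ℝ,
      IsClosed {B : PosCap (PosCap X) | s ≤ B.1.toFun {c : PosCap X | t ≤ c.1.toFun A}} :=
    fun t s => posCap_closed_ge _ (hASc t) s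
  have hmu : ∀ B : PosCap (PosCap X), muStar B A
      = sSup ((fun s => B.1.toFun {c : PosCap X | s ≤ c.1.toFun A} * s) '' Set.Ioc (0:ℝ) 1) :=
    fun B => rfl
  have hne : ∀ f : ℝ → ℝ, ((fun s => f s * s) '' Set.Ioc (0:ℝ) 1).Nonempty :=
    fun f => ⟨f 1 * 1, 1, ⟨one_pos, le_refl 1⟩, rfl⟩
  have hbdd : ∀ f : ℝ → ℝ, (∀ s, 0 ≤ f s) → (∀ s, f s ≤ 1) →
      BddAbove ((fun s => f s * s) '' Set.Ioc (0:ℝ) 1) := by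
    intro f h0 h1
    refine ⟨1, ?_⟩
    rintro x ⟨s, ⟨hs0, hs1⟩, rfl⟩
    exact mul_le_one₀ (h1 s) hs0.le hs1
  have hbddB : ∀ B : PosCap (PosCap X),
      BddAbove ((fun s => B.1.toFun {c : PosCap X | s ≤ c.1.toFun A} * s) '' Set.Ioc (0:ℝ) 1) :=
    fun B => hbdd _ (fun s => B.1.nonneg _) (fun s => B.1.le_one _)
  have hmu_ge : ∀ (B : PosCap (PosCap X)) (s : ℝ), s ∈ Set.Ioc (0:ℝ) 1 →
      B.1.toFun {c : PosCap X | s ≤ c.1.toFun A} * s ≤ muStar B A := by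
    intro B s hs
    rw [hmu]
    exact le_csSup (hbddB B) ⟨s, hs, rfl⟩
  have hmu0 : ∀ B : PosCap (PosCap X), 0 ≤ muStar B A := fun B =>
    le_trans (mul_nonneg (B.1.nonneg _) zero_le_one) (hmu_ge B 1 ⟨one_pos, le_rfl⟩)
  have hmono_AS : ∀ (B : PosCap (PosCap X)) (s s' : ℝ), s ≤ s' →
      B.1.toFun {c : PosCap X | s' ≤ c.1.toFun A}
        ≤ B.1.toFun {c : PosCap X | s ≤ c.1.toFun A} :=
    fun B s s' h => B.1.mono (hASc s') (hASc s) (fun c hc => le_trans h hc)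
  -- closedness of S t
  have hSclosed : ∀ t : ℝ, 0 < t → t ≤ 1 →
      IsClosed {B : PosCap (PosCap X) | t ≤ muStar B A} := by
    intro t ht0 ht1
    rw [← isOpen_compl_iff]
    have h : {B : PosCap (PosCap X) | t ≤ muStar B A}ᶜ
        = {B : PosCap (PosCap X) | muStar B A < t} := by
      ext B; simp [not_le]
    rw [h, isOpen_iff_forall_mem_open]
    intro B hB
    have hmt : muStar B A < t := hB
    have hm0 : 0 ≤ muStar B A := hmu0 B
    set t' : ℝ := (muStar B A + t)/2 with ht'def
    have ht'0 : 0 < t' := by simp only [ht'def]; linarith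
    have hmt' : muStar B A < t' := by simp only [ht'def]; linarith
    have ht't : t' < t := by simp only [ht'def]; linarith
    have ht'1 : t' ≤ 1 := by linarith
    set ε : ℝ := (t - t')/2 with hεdef
    have hε : 0 < ε := by simp only [hεdef]; linarith
    have htε : t' + ε < t := by simp only [hεdef]; linarith
    set n : ℕ := ⌈1/ε⌉₊ + 1 with hndef
    set g : ℕ → ℝ := fun i => min (t' + i*ε) 1 with hgdef
    have hg0 : ∀ i : ℕ, 0 < g i := fun i =>
      lt_min (by positivity) one_pos
    have hg1 : ∀ i : ℕ, g i ≤ 1 := fun i => min_le_right _ _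
    have hgt' : ∀ i : ℕ, t' ≤ g i := fun i =>
      le_min (le_add_of_nonneg_right (by positivity)) ht'1
    have hgstep : ∀ i : ℕ, g (i+1) ≤ g i + ε := by
      intro i
      have h1 : g (i+1) ≤ min ((t' + i*ε) + ε) (1 + ε) := by
        apply min_le_min _ (by linarith)
        push_cast
        linarith
      calc g (i+1) ≤ min ((t' + i*ε) + ε) (1 + ε) := h1
        _ = g i + ε := min_add_add_right _ _ _
    refine ⟨⋂ i ∈ Finset.range n,
      {B' : PosCap (PosCap X) |
        B'.1.toFun {c : PosCap X | g i ≤ c.1.toFun A} < t' / g i}, ?_, ?_, ?_⟩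
    · intro B' hB'
      simp only [Set.mem_iInter, Finset.mem_range] at hB'
      show muStar B' A < t
      rw [hmu]
      refine lt_of_le_of_lt (csSup_le (hne _) ?_) htε
      rintro x ⟨s, ⟨hs0, hs1⟩, rfl⟩
      dsimp only
      by_cases hsδ : s ≤ t'
      · have h1 : B'.1.toFun {c : PosCap X | s ≤ c.1.toFun A} * s ≤ 1 * s :=
          mul_le_mul_of_nonneg_right (B'.1.le_one _) hs0.le
        simp only [one_mul] at h1
        linarith
      · push_neg at hsδ
        set i : ℕ := ⌊(s - t')/ε⌋₊ with hidef
        have hile : (i:ℝ) ≤ (s - t')/ε := Nat.floor_le (div_nonneg (by linarith) hε.le)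
        have hgi_le_s : g i ≤ s := by
          refine le_trans (min_le_left _ _) ?_
          have h2 : (i:ℝ)*ε ≤ s - t' := by
            rw [← le_div_iff₀ hε] at *
            exact hile
          linarith
        have hs_le_gi1 : s ≤ g (i+1) := by
          refine le_min ?_ hs1
          have h2 := Nat.lt_floor_add_one ((s - t')/ε)
          rw [div_lt_iff₀ hε] at h2
          push_cast
          linarith
        have hin : i < n := by
          have h1 : (s - t')/ε ≤ 1/ε := by gcongr <;> linarith
          have h2 : i ≤ ⌊1/ε⌋₊ := Nat.floor_le_floor h1
          have h3 : ⌊1/ε⌋₊ ≤ ⌈1/ε⌉₊ := Nat.floor_le_ceil _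
          omega
        have hmem := hB' i hin
        have hmono := hmono_AS B' (g i) s hgi_le_s
        have hlt : B'.1.toFun {c : PosCap X | s ≤ c.1.toFun A} * s
            < (t'/g i) * g (i+1) := by
          have h1 : B'.1.toFun {c : PosCap X | s ≤ c.1.toFun A} * s
              ≤ B'.1.toFun {c : PosCap X | g i ≤ c.1.toFun A} * s :=
            mul_le_mul_of_nonneg_right hmono hs0.le
          have h2 : B'.1.toFun {c : PosCap X | g i ≤ c.1.toFun A} * s < (t'/g i) * s :=
            mul_lt_mul_of_pos_right hmem hs0
          have h3 : (t'/g i) * s ≤ (t'/g i) * g (i+1) :=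
            mul_le_mul_of_nonneg_left hs_le_gi1 (by positivity)
          linarith
        have hfin : (t'/g i) * g (i+1) ≤ t' + ε := by
          have h1 : g (i+1) ≤ g i + ε := hgstep i
          have h2 : (t'/g i) * g i = t' := div_mul_cancel₀ _ (ne_of_gt (hg0 i))
          have h3 : t'/g i ≤ 1 := div_le_one_of_le₀ (hgt' i) (hg0 i).le
          have h4 : 0 ≤ t'/g i := by positivity
          nlinarith [mul_le_mul_of_nonneg_left h1 h4]
        linarith
    · exact isOpen_biInter_finset (fun i _ => posCap_open_lt _ (hASc (g i)) _)
    · simp only [Set.mem_iInter, Finset.mem_range, Set.mem_setOf_eq]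
      intro i _
      have h1 : B.1.toFun {c : PosCap X | g i ≤ c.1.toFun A} * g i ≤ muStar B A :=
        hmu_ge B (g i) ⟨hg0 i, hg1 i⟩
      rw [lt_div_iff₀ (hg0 i)]
      linarith
  have hI0 : ∀ t : ℝ, 0 ≤ sSup ((fun s =>
      G.toFun {B : PosCap (PosCap X) | s ≤ B.1.toFun {c : PosCap X | t ≤ c.1.toFun A}}
        * s) '' Set.Ioc (0:ℝ) 1) := fun t =>
    le_trans (mul_nonneg (G.nonneg _) zero_le_one)
      (le_csSup (hbdd _ (fun s => G.nonneg _) (fun s => G.le_one _)) ⟨1, ⟨one_pos, le_rfl⟩, rfl⟩)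
  have hI1 : ∀ t : ℝ, sSup ((fun s =>
      G.toFun {B : PosCap (PosCap X) | s ≤ B.1.toFun {c : PosCap X | t ≤ c.1.toFun A}}
        * s) '' Set.Ioc (0:ℝ) 1) ≤ 1 := by
    intro t
    refine csSup_le (hne _) ?_
    rintro x ⟨s, ⟨hs0, hs1⟩, rfl⟩
    exact mul_le_one₀ (G.le_one _) hs0.le hs1
  set R : ℝ := sSup ((fun t =>
      sSup ((fun s =>
          G.toFun {B : PosCap (PosCap X) | s ≤ B.1.toFun {c : PosCap X | t ≤ c.1.toFun A}}
            * s) '' Set.Ioc (0:ℝ) 1) * t) '' Set.Ioc (0:ℝ) 1) with hR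
  set L : ℝ := sSup ((fun t =>
      G.toFun {B : PosCap (PosCap X) | t ≤ muStar B A} * t) '' Set.Ioc (0:ℝ) 1) with hL
  have hRbdd : BddAbove ((fun t =>
      sSup ((fun s =>
          G.toFun {B : PosCap (PosCap X) | s ≤ B.1.toFun {c : PosCap X | t ≤ c.1.toFun A}}
            * s) '' Set.Ioc (0:ℝ) 1) * t) '' Set.Ioc (0:ℝ) 1) := hbdd _ hI0 hI1
  have hLbdd : BddAbove ((fun t =>
      G.toFun {B : PosCap (PosCap X) | t ≤ muStar B A} * t) '' Set.Ioc (0:ℝ) 1) :=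
    hbdd _ (fun t => G.nonneg _) (fun t => G.le_one _)
  apply le_antisymm
  · -- L ≤ R
    rw [hL]
    apply csSup_le (hne _)
    rintro x ⟨t, ⟨ht0, ht1⟩, rfl⟩
    show G.toFun {B : PosCap (PosCap X) | t ≤ muStar B A} * t ≤ R
    have key : ∀ ε : ℝ, 0 < ε → ε < t →
        G.toFun {B : PosCap (PosCap X) | t ≤ muStar B A} * t ≤ R + 2*ε := by
      intro ε hε hεt
      set δ : ℝ := t - ε with hδdef
      have hδ0 : 0 < δ := by simp only [hδdef]; linarith
      have hδ1 : δ ≤ 1 := by simp only [hδdef]; linarith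
      set n : ℕ := ⌈1/ε⌉₊ + 1 with hndef
      set g : ℕ → ℝ := fun i => min (δ + i*ε) 1 with hgdef
      have hg0 : ∀ i : ℕ, 0 < g i := fun i => lt_min (by positivity) one_pos
      have hg1 : ∀ i : ℕ, g i ≤ 1 := fun i => min_le_right _ _
      have hgstep : ∀ i : ℕ, g (i+1) ≤ g i + ε := by
        intro i
        have h1 : g (i+1) ≤ min ((δ + i*ε) + ε) (1 + ε) := by
          apply min_le_min _ (by linarith)
          push_cast
          linarith
        calc g (i+1) ≤ min ((δ + i*ε) + ε) (1 + ε) := h1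
          _ = g i + ε := min_add_add_right _ _ _
      have hcov : {B : PosCap (PosCap X) | t ≤ muStar B A} ⊆
          ⋃ j ∈ Finset.range n,
            {B : PosCap (PosCap X) |
              (t-ε)/g (j+1) ≤ B.1.toFun {c : PosCap X | g j ≤ c.1.toFun A}} := by
        intro B hB
        have h1 : t - ε < muStar B A := lt_of_lt_of_le (by linarith) hB
        rw [hmu] at h1
        obtain ⟨x, ⟨s, ⟨hs0, hs1⟩, rfl⟩, hx⟩ := exists_lt_of_lt_csSup (hne _) h1
        dsimp only at hx
        have hsδ : δ < s := by
          have h2 : B.1.toFun {c : PosCap X | s ≤ c.1.toFun A} * s ≤ 1*s :=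
            mul_le_mul_of_nonneg_right (B.1.le_one _) hs0.le
          simp only [one_mul] at h2
          simp only [hδdef]
          linarith
        set i : ℕ := ⌊(s - δ)/ε⌋₊ with hidef
        have hile : (i:ℝ) ≤ (s - δ)/ε := Nat.floor_le (div_nonneg (by linarith) hε.le)
        have hgi_le_s : g i ≤ s := by
          refine le_trans (min_le_left _ _) ?_
          have h2 : (i:ℝ)*ε ≤ s - δ := by
            rw [← le_div_iff₀ hε]
            exact hile
          linarith
        have hs_le_gi1 : s ≤ g (i+1) := by
          refine le_min ?_ hs1
          have h2 := Nat.lt_floor_add_one ((s - δ)/ε)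
          rw [div_lt_iff₀ hε] at h2
          push_cast
          linarith
        have hin : i < n := by
          have h1' : (s - δ)/ε ≤ 1/ε := by gcongr <;> linarith
          have h2 : i ≤ ⌊1/ε⌋₊ := Nat.floor_le_floor h1'
          have h3 : ⌊1/ε⌋₊ ≤ ⌈1/ε⌉₊ := Nat.floor_le_ceil _
          omega
        simp only [Set.mem_iUnion, Finset.mem_range, Set.mem_setOf_eq]
        refine ⟨i, hin, ?_⟩
        have h2 : B.1.toFun {c : PosCap X | s ≤ c.1.toFun A}
            ≤ B.1.toFun {c : PosCap X | g i ≤ c.1.toFun A} := hmono_AS B _ _ hgi_le_s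
        have h3 : (t-ε)/s ≤ B.1.toFun {c : PosCap X | s ≤ c.1.toFun A} := by
          rw [div_le_iff₀ hs0]
          linarith
        have h4 : (t-ε)/g (i+1) ≤ (t-ε)/s := by
          gcongr <;> linarith
        linarith
      have hCcl : ∀ j : ℕ, IsClosed {B : PosCap (PosCap X) |
          (t-ε)/g (j+1) ≤ B.1.toFun {c : PosCap X | g j ≤ c.1.toFun A}} :=
        fun j => posCap_closed_ge _ (hASc _) _
      obtain ⟨i, hin, hGmax⟩ := posCap_union_max G hG n (Nat.succ_pos _) _ hCcl
      have hGS : G.toFun {B : PosCap (PosCap X) | t ≤ muStar B A}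
          ≤ G.toFun {B : PosCap (PosCap X) |
              (t-ε)/g (i+1) ≤ B.1.toFun {c : PosCap X | g i ≤ c.1.toFun A}} := by
        refine le_trans (G.mono (hSclosed t ht0 ht1) ?_ hcov) hGmax
        exact Set.Finite.isClosed_biUnion (Finset.finite_toSet _) (fun j _ => hCcl j)
      set r : ℝ := (t-ε)/g (i+1) with hrdef
      have hgi1_ge_t : t ≤ g (i+1) := by
        refine le_min ?_ ht1
        push_cast
        nlinarith [hε.le, (Nat.cast_nonneg i : (0:ℝ) ≤ (i:ℝ))]
      have hr0 : 0 < r := div_pos (by linarith) (hg0 _)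
      have hr1 : r ≤ 1 := by
        rw [hrdef, div_le_one (hg0 _)]
        linarith
      have hgir : t - 2*ε ≤ g i * r := by
        have h1 : g (i+1) ≤ g i + ε := hgstep i
        have h2 : r * g (i+1) = t - ε := div_mul_cancel₀ _ (ne_of_gt (hg0 _))
        nlinarith [hr0.le, hr1, (hg0 i).le]
      have e1 : G.toFun {B : PosCap (PosCap X) |
            r ≤ B.1.toFun {c : PosCap X | g i ≤ c.1.toFun A}} * r
          ≤ sSup ((fun s =>
              G.toFun {B : PosCap (PosCap X) |
                s ≤ B.1.toFun {c : PosCap X | g i ≤ c.1.toFun A}} * s) '' Set.Ioc (0:ℝ) 1) :=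
        le_csSup (hbdd _ (fun s => G.nonneg _) (fun s => G.le_one _)) ⟨r, ⟨hr0, hr1⟩, rfl⟩
      have e2 : sSup ((fun s =>
              G.toFun {B : PosCap (PosCap X) |
                s ≤ B.1.toFun {c : PosCap X | g i ≤ c.1.toFun A}} * s) '' Set.Ioc (0:ℝ) 1)
            * g i ≤ R := by
        rw [hR]
        exact le_csSup hRbdd ⟨g i, ⟨hg0 i, hg1 i⟩, rfl⟩
      have hq0 : (0:ℝ) ≤ G.toFun {B : PosCap (PosCap X) |
          r ≤ B.1.toFun {c : PosCap X | g i ≤ c.1.toFun A}} := G.nonneg _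
      have hq1 : G.toFun {B : PosCap (PosCap X) |
          r ≤ B.1.toFun {c : PosCap X | g i ≤ c.1.toFun A}} ≤ 1 := G.le_one _
      have step1 : G.toFun {B : PosCap (PosCap X) | t ≤ muStar B A} * t
          ≤ G.toFun {B : PosCap (PosCap X) |
              r ≤ B.1.toFun {c : PosCap X | g i ≤ c.1.toFun A}} * t :=
        mul_le_mul_of_nonneg_right hGS ht0.le
      have hIgi0 := hI0 (g i)
      nlinarith [mul_le_mul_of_nonneg_right e1 (hg0 i).le,
        mul_le_mul_of_nonneg_left hgir hq0, hε.le]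
    by_contra hcon
    push_neg at hcon
    have hd : 0 < (G.toFun {B : PosCap (PosCap X) | t ≤ muStar B A} * t - R) := by linarith
    set d := G.toFun {B : PosCap (PosCap X) | t ≤ muStar B A} * t - R with hddef
    have hmin0 : 0 < min (d/4) (t/2) := lt_min (by linarith) (by linarith)
    have hmint : min (d/4) (t/2) < t := lt_of_le_of_lt (min_le_right _ _) (by linarith)
    have := key (min (d/4) (t/2)) hmin0 hmint
    have h1 : min (d/4) (t/2) ≤ d/4 := min_le_left _ _
    linarith
  · -- R ≤ L
    rw [hR]
    apply csSup_le (hne _)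
    rintro x ⟨t, ⟨ht0, ht1⟩, rfl⟩
    show sSup ((fun s =>
        G.toFun {B : PosCap (PosCap X) | s ≤ B.1.toFun {c : PosCap X | t ≤ c.1.toFun A}}
          * s) '' Set.Ioc (0:ℝ) 1) * t ≤ L
    have hinner : ∀ y ∈ ((fun s =>
        G.toFun {B : PosCap (PosCap X) | s ≤ B.1.toFun {c : PosCap X | t ≤ c.1.toFun A}}
          * s) '' Set.Ioc (0:ℝ) 1), y ≤ L / t := by
      rintro y ⟨s, ⟨hs0, hs1⟩, rfl⟩
      rw [le_div_iff₀ ht0]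
      have hst0 : 0 < s*t := mul_pos hs0 ht0
      have hst1 : s*t ≤ 1 := mul_le_one₀ hs1 ht0.le ht1
      have hsub : {B : PosCap (PosCap X) | s ≤ B.1.toFun {c : PosCap X | t ≤ c.1.toFun A}}
          ⊆ {B : PosCap (PosCap X) | s*t ≤ muStar B A} := by
        intro B hB
        have h1 : s*t ≤ B.1.toFun {c : PosCap X | t ≤ c.1.toFun A} * t :=
          mul_le_mul_of_nonneg_right hB ht0.le
        exact le_trans h1 (hmu_ge B t ⟨ht0, ht1⟩)
      have hm : G.toFun {B : PosCap (PosCap X) |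
            s ≤ B.1.toFun {c : PosCap X | t ≤ c.1.toFun A}}
          ≤ G.toFun {B : PosCap (PosCap X) | s*t ≤ muStar B A} :=
        G.mono (hTc t s) (hSclosed (s*t) hst0 hst1) hsub
      have h2 : G.toFun {B : PosCap (PosCap X) | s*t ≤ muStar B A} * (s*t) ≤ L := by
        rw [hL]
        exact le_csSup hLbdd ⟨s*t, ⟨hst0, hst1⟩, rfl⟩
      calc G.toFun {B : PosCap (PosCap X) |
            s ≤ B.1.toFun {c : PosCap X | t ≤ c.1.toFun A}} * s * t
          = G.toFun {B : PosCap (PosCap X) |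
            s ≤ B.1.toFun {c : PosCap X | t ≤ c.1.toFun A}} * (s*t) := mul_assoc _ _ _
        _ ≤ G.toFun {B : PosCap (PosCap X) | s*t ≤ muStar B A} * (s*t) :=
            mul_le_mul_of_nonneg_right hm hst0.le
        _ ≤ L := h2
    have h3 : sSup ((fun s =>
        G.toFun {B : PosCap (PosCap X) | s ≤ B.1.toFun {c : PosCap X | t ≤ c.1.toFun A}}
          * s) '' Set.Ioc (0:ℝ) 1) ≤ L / t := csSup_le (hne _) hinner
    calc sSup ((fun s =>
        G.toFun {B : PosCap (PosCap X) | s ≤ B.1.toFun {c : PosCap X | t ≤ c.1.toFun A}}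
          * s) '' Set.Ioc (0:ℝ) 1) * t ≤ (L/t) * t :=
          mul_le_mul_of_nonneg_right h3 ht0.le
      _ = L := div_mul_cancel₀ _ (ne_of_gt ht0)
end

section
/- The natural transformation μ• on the full capacity functor M fails associativity: there exists a two-point discrete space X = {a,b} and ℷ ∈ M(M(MX)) such that μ•X ∘ M(μ•X)(ℷ)({a}) ≥ 1/2 while μ•X ∘ μ•(MX)(ℷ)({a}) = 1/4. Concretely, with 𝔄₁(α) = 1 iff α ⊇ {a}_{1/2} (else 0), 𝔄₂(α) = 1 iff α = MX, = 1/2 iff α ⊇ {a}_1 (else 0), and ℷ(Λ) = (1/2)η(𝔄₁)(Λ) + (1/2)η(𝔄₂)(Λ), the two iterated multiplications disagree on {a}. -/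
/-!
Both iterated multiplications are max-product integrals `max_{t ∈ (0,1]} g t * t` of step
functions `g`. Along `M(μ•)`, both `𝔄₁` and `𝔄₂` are sent to capacities with value `1/2` on
`{a}`, so the left-hand side is `1/2`. Along `μ•(MX)`, the integrand at level `t` is
`½[s ≤ 𝔄₁({a}_t)] + ½[s ≤ 1/2]`; it integrates to `1/2` for `t ≤ 1/2` but only to `1/4` for
`t > 1/2`, where `𝔄₁({a}_t)` drops to `0`, so the right-hand side is `1/4`.

The topological content is upper semicontinuity of `𝔄₁`, `𝔄₂` and `ℷ`. The topology of `M(MX)`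
ignores values on non-closed sets, so it is not T1 and a Dirac capacity need not be upper
semicontinuous. It is at a point that specializes only to points specializing back to it, which
holds for `𝔄₁` and `𝔄₂` because their upper semicontinuity is uniform over all subsets of a
neighbourhood, not only over compact ones.
-/

open Set TopologicalSpace
open scoped Classical

/-- The topology on the space of all capacities, generated by the subbase
of sets of capacities small on a given closed set or large on a given open set. -/
instance instTopCap (X : Type*) [TopologicalSpace X] : TopologicalSpace (Capacity X) :=
  TopologicalSpace.generateFrom
    ({S | ∃ (F : Set X) (a : ℝ), IsClosed F ∧ S = {c : Capacity X | c.toFun F < a}} ∪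
     {S | ∃ (U : Set X) (a : ℝ), IsOpen U ∧ S = {c : Capacity X | a < capExt c.toFun U}})

/-- The max-product multiplication for arbitrary capacities of second order. -/
noncomputable def muStarM {X : Type*} [TopologicalSpace X]
    (A : Capacity (Capacity X)) (F : Set X) : ℝ :=
  sSup ((fun t => A.toFun {c : Capacity X | t ≤ c.toFun F} * t) '' Set.Ioc (0:ℝ) 1)


namespace Capacity

variable {X : Type*} [TopologicalSpace X]

theorem ext {c d : Capacity X} (h : ∀ A, c.toFun A = d.toFun A) : c = d := by
  cases c; cases d; simp only [mk.injEq]; exact funext h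

theorem le_capExt (c : Capacity X) {K U : Set X} (hK : IsClosed K) (hKU : K ⊆ U) :
    c.toFun K ≤ capExt c.toFun U :=
  le_csSup ⟨1, by rintro _ ⟨L, _, rfl⟩; exact c.le_one L⟩ ⟨K, ⟨hK, hKU⟩, rfl⟩

theorem capExt_le (c : Capacity X) {U : Set X} {a : ℝ}
    (h : ∀ K, IsClosed K → K ⊆ U → c.toFun K ≤ a) : capExt c.toFun U ≤ a :=
  csSup_le ⟨_, ∅, ⟨isClosed_empty, empty_subset U⟩, rfl⟩ <| by
    rintro _ ⟨K, ⟨hK, hKU⟩, rfl⟩; exact h K hK hKU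

theorem capExt_of_isClosed (c : Capacity X) {U : Set X} (hU : IsClosed U) :
    capExt c.toFun U = c.toFun U :=
  le_antisymm (c.capExt_le fun _ hK hKU => c.mono hK hU hKU) (c.le_capExt hU subset_rfl)

theorem capExt_mono {c d : Capacity X} (h : ∀ K, IsClosed K → c.toFun K ≤ d.toFun K)
    (U : Set X) : capExt c.toFun U ≤ capExt d.toFun U :=
  c.capExt_le fun K hK hKU => (h K hK).trans (d.le_capExt hK hKU)

theorem isOpen_setOf_toFun_lt {F : Set X} (hF : IsClosed F) (a : ℝ) :
    IsOpen {c : Capacity X | c.toFun F < a} :=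
  isOpen_generateFrom_of_mem (Or.inl ⟨F, a, hF, rfl⟩)

theorem isOpen_setOf_lt_capExt {U : Set X} (hU : IsOpen U) (a : ℝ) :
    IsOpen {c : Capacity X | a < capExt c.toFun U} :=
  isOpen_generateFrom_of_mem (Or.inr ⟨U, a, hU, rfl⟩)

theorem specializes_iff {c d : Capacity X} :
    c ⤳ d ↔ (∀ F, IsClosed F → c.toFun F ≤ d.toFun F) ∧
      (∀ U, IsOpen U → capExt d.toFun U ≤ capExt c.toFun U) := by
  constructor
  · intro h
    refine ⟨fun F hF => not_lt.1 fun hlt => ?_, fun U hU => not_lt.1 fun hlt => ?_⟩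
    · exact lt_irrefl (c.toFun F) <|
        specializes_iff_forall_open.1 h _ (isOpen_setOf_toFun_lt hF (c.toFun F)) hlt
    · exact lt_irrefl (capExt c.toFun U) <|
        specializes_iff_forall_open.1 h _ (isOpen_setOf_lt_capExt hU (capExt c.toFun U)) hlt
  · rintro ⟨hclosed, hopen⟩
    show nhds c ≤ nhds d
    conv_rhs => rw [nhds_generateFrom]
    refine le_iInf₂ fun s ⟨hds, hs⟩ => Filter.le_principal_iff.2 <|
      (isOpen_generateFrom_of_mem hs).mem_nhds ?_
    rcases hs with ⟨F, a, hF, rfl⟩ | ⟨U, a, hU, rfl⟩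
    · exact (hclosed F hF).trans_lt hds
    · exact hds.trans_le (hopen U hU)

instance [DiscreteTopology X] : T1Space (Capacity X) := by
  refine t1Space_iff_exists_open.2 fun c d hcd => ?_
  obtain ⟨A, hA⟩ : ∃ A, c.toFun A ≠ d.toFun A := not_forall.1 (mt ext hcd)
  rcases hA.lt_or_gt with hlt | hlt
  · exact ⟨_, isOpen_setOf_toFun_lt (isClosed_discrete A) (d.toFun A), hlt, lt_irrefl (d.toFun A)⟩
  · refine ⟨_, isOpen_setOf_lt_capExt (isOpen_discrete A) (d.toFun A), ?_, ?_⟩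
    · simpa only [mem_ofPred_eq, capExt_of_isClosed _ (isClosed_discrete A)] using hlt
    · simp only [mem_ofPred_eq, capExt_of_isClosed _ (isClosed_discrete A), lt_irrefl,
        not_false_eq_true]

end Capacity

theorem exists_isOpen_superset_of_specializes_symm {Y : Type*} [TopologicalSpace Y] {y : Y}
    (hy : ∀ z, y ⤳ z → z ⤳ y) {F : Set Y} (hF : IsClosed F) :
    ∃ U, IsOpen U ∧ F ⊆ U ∧ (y ∈ U → y ∈ F) := by
  by_cases hyF : y ∈ F
  · exact ⟨univ, isOpen_univ, subset_univ F, fun _ => hyF⟩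
  refine ⟨(closure {y})ᶜ, isClosed_closure.isOpen_compl, fun z hzF hz => hyF ?_,
    fun hy' => (hy' (subset_closure rfl)).elim⟩
  exact (hy z (specializes_iff_mem_closure.2 hz)).mem_closed hF hzF

theorem exists_isOpen_superset_of_subset_imp {Y : Type*} [TopologicalSpace Y] [R0Space Y]
    {F : Set Y} (hF : IsClosed F) (S : Set Y) :
    ∃ U, IsOpen U ∧ F ⊆ U ∧ (S ⊆ U → S ⊆ F) := by
  by_cases hSF : S ⊆ F
  · exact ⟨univ, isOpen_univ, subset_univ F, fun _ => hSF⟩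
  obtain ⟨c, hcS, hcF⟩ := not_subset.1 hSF
  obtain ⟨U, hU, hFU, hcU⟩ :=
    exists_isOpen_superset_of_specializes_symm (fun _ h => h.symm) hF (y := c)
  exact ⟨U, hU, hFU, fun hSU => (hcF (hcU (hSU hcS))).elim⟩

/-- Stronger than the `usc` field of `Capacity`: the bound holds on all subsets of `U`, not only
on compact ones. -/
def IsStronglyUSC {Y : Type*} [TopologicalSpace Y] (m : Set Y → ℝ) : Prop :=
  ∀ ⦃F : Set Y⦄ ⦃a : ℝ⦄, IsClosed F → m F < a →
    ∃ U, IsOpen U ∧ F ⊆ U ∧ ∀ ⦃K⦄, K ⊆ U → m K < a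

theorem IsStronglyUSC.usc {Y : Type*} [TopologicalSpace Y] {m : Set Y → ℝ}
    (hm : IsStronglyUSC m) ⦃F : Set Y⦄ ⦃a : ℝ⦄ (hF : IsClosed F) (hFa : m F < a) :
    ∃ U : Set Y, IsOpen U ∧ F ⊆ U ∧ ∀ ⦃K : Set Y⦄, IsCompact K → K ⊆ U → m K < a :=
  let ⟨U, hU, hFU, hUa⟩ := hm hF hFa
  ⟨U, hU, hFU, fun _ _ hKU => hUa hKU⟩

theorem Capacity.specializes_symm_of_isStronglyUSC {X : Type*} [TopologicalSpace X]
    {x B : Capacity X} (hx : IsStronglyUSC x.toFun) (h : x ⤳ B) : B ⤳ x := by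
  obtain ⟨hclosed, hopen⟩ := specializes_iff.1 h
  refine specializes_iff.2 ⟨fun F hF => le_of_forall_gt_imp_ge_of_dense fun a ha => ?_,
    fun U _ => capExt_mono hclosed U⟩
  obtain ⟨U, hU, hFU, hUa⟩ := hx hF ha
  calc B.toFun F ≤ capExt B.toFun U := B.le_capExt hF hFU
    _ ≤ capExt x.toFun U := hopen U hU
    _ ≤ a := x.capExt_le fun K _ hKU => (hUa hKU).le

section Step

variable {Y : Type*} (S T : Set Y) (t : ℝ)

noncomputable def stepFun (α : Set Y) : ℝ := if T ⊆ α then 1 else if S ⊆ α then t else 0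

variable {S T t}

theorem stepFun_le_stepFun (ht : t ∈ Icc (0 : ℝ) 1) {α β : Set Y} (hT : T ⊆ α → T ⊆ β)
    (hS : S ⊆ α → S ⊆ β) : stepFun S T t α ≤ stepFun S T t β := by
  unfold stepFun
  split_ifs <;> first | linarith [ht.1, ht.2] | tauto

theorem isStronglyUSC_stepFun [TopologicalSpace Y] [R0Space Y] (ht : t ∈ Icc (0 : ℝ) 1) :
    IsStronglyUSC (stepFun S T t) := by
  intro F a hF hFa
  obtain ⟨U, hU, hFU, hSU⟩ := exists_isOpen_superset_of_subset_imp hF S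
  obtain ⟨V, hV, hFV, hTV⟩ := exists_isOpen_superset_of_subset_imp hF T
  refine ⟨U ∩ V, hU.inter hV, subset_inter hFU hFV, fun K hK => lt_of_le_of_lt ?_ hFa⟩
  exact stepFun_le_stepFun ht (fun h => hTV (h.trans (hK.trans inter_subset_right)))
    (fun h => hSU (h.trans (hK.trans inter_subset_left)))

noncomputable def Capacity.step [TopologicalSpace Y] [R0Space Y] (hS : S.Nonempty)
    (hT : T.Nonempty) (ht : t ∈ Icc (0 : ℝ) 1) : Capacity Y where
  toFun := stepFun S T t
  nonneg α := by unfold stepFun; split_ifs <;> linarith [ht.1]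
  le_one α := by unfold stepFun; split_ifs <;> linarith [ht.2]
  empty' := by simp [stepFun, subset_empty_iff, hS.ne_empty, hT.ne_empty]
  univ' := if_pos (subset_univ T)
  mono _ _ _ _ hAB := stepFun_le_stepFun ht (fun h => h.trans hAB) (fun h => h.trans hAB)
  usc := (isStronglyUSC_stepFun ht).usc

theorem Capacity.isStronglyUSC_step [TopologicalSpace Y] [R0Space Y] (hS : S.Nonempty)
    (hT : T.Nonempty) (ht : t ∈ Icc (0 : ℝ) 1) : IsStronglyUSC (Capacity.step hS hT ht).toFun :=
  isStronglyUSC_stepFun ht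

end Step

section ConvexDirac

variable {Y : Type*} (w₁ w₂ : ℝ) (y₁ y₂ : Y)

noncomputable def convexDiracFun (Λ : Set Y) : ℝ :=
  w₁ * (if y₁ ∈ Λ then 1 else 0) + w₂ * (if y₂ ∈ Λ then 1 else 0)

variable {w₁ w₂ y₁ y₂}

theorem convexDiracFun_le_convexDiracFun (hw₁ : 0 ≤ w₁) (hw₂ : 0 ≤ w₂) {Λ Λ' : Set Y}
    (h₁ : y₁ ∈ Λ → y₁ ∈ Λ') (h₂ : y₂ ∈ Λ → y₂ ∈ Λ') :
    convexDiracFun w₁ w₂ y₁ y₂ Λ ≤ convexDiracFun w₁ w₂ y₁ y₂ Λ' := by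
  unfold convexDiracFun
  split_ifs <;> first | linarith | tauto

theorem isStronglyUSC_convexDiracFun [TopologicalSpace Y] (hw₁ : 0 ≤ w₁) (hw₂ : 0 ≤ w₂)
    (hy₁ : ∀ z, y₁ ⤳ z → z ⤳ y₁) (hy₂ : ∀ z, y₂ ⤳ z → z ⤳ y₂) :
    IsStronglyUSC (convexDiracFun w₁ w₂ y₁ y₂) := by
  intro F a hF hFa
  obtain ⟨U, hU, hFU, hyU⟩ := exists_isOpen_superset_of_specializes_symm hy₁ hF
  obtain ⟨V, hV, hFV, hyV⟩ := exists_isOpen_superset_of_specializes_symm hy₂ hF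
  refine ⟨U ∩ V, hU.inter hV, subset_inter hFU hFV, fun K hK => lt_of_le_of_lt ?_ hFa⟩
  exact convexDiracFun_le_convexDiracFun hw₁ hw₂ (fun h => hyU (hK h).1) (fun h => hyV (hK h).2)

noncomputable def Capacity.convexDirac [TopologicalSpace Y] (hw₁ : 0 ≤ w₁) (hw₂ : 0 ≤ w₂)
    (hw : w₁ + w₂ = 1)
    (hy₁ : ∀ z, y₁ ⤳ z → z ⤳ y₁) (hy₂ : ∀ z, y₂ ⤳ z → z ⤳ y₂) : Capacity Y where
  toFun := convexDiracFun w₁ w₂ y₁ y₂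
  nonneg Λ := by unfold convexDiracFun; split_ifs <;> linarith
  le_one Λ := by unfold convexDiracFun; split_ifs <;> linarith
  empty' := by simp [convexDiracFun]
  univ' := by simp [convexDiracFun, hw]
  mono _ _ _ _ hAB := convexDiracFun_le_convexDiracFun hw₁ hw₂ (@hAB _) (@hAB _)
  usc := (isStronglyUSC_convexDiracFun hw₁ hw₂ hy₁ hy₂).usc

end ConvexDirac

section MaxProd

noncomputable def maxProd (g : ℝ → ℝ) : ℝ := sSup ((fun t => g t * t) '' Ioc 0 1)

theorem maxProd_congr {g g' : ℝ → ℝ} (h : EqOn g g' (Ioc 0 1)) : maxProd g = maxProd g' := by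
  unfold maxProd
  rw [EqOn.image_eq fun t ht => by rw [h ht]]

theorem maxProd_eq {g : ℝ → ℝ} {v w : ℝ} (hw : w ∈ Ioc (0 : ℝ) 1) (hwv : g w * w = v)
    (hle : ∀ t ∈ Ioc (0 : ℝ) 1, g t * t ≤ v) : maxProd g = v :=
  IsGreatest.csSup_eq ⟨⟨w, hw, hwv⟩, by rintro _ ⟨t, ht, rfl⟩; exact hle t ht⟩

theorem maxProd_step {r a : ℝ} (hr : r ∈ Ioc (0 : ℝ) 1) (ha : 0 ≤ a) :
    maxProd (fun t => if t ≤ r then a else 0) = a * r := by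
  refine maxProd_eq hr (by simp) fun t ht => ?_
  split_ifs with htr
  · exact mul_le_mul_of_nonneg_left htr ha
  · nlinarith [hr.1]

theorem maxProd_add_step {r r' a b : ℝ} (hr : 0 < r) (hrr' : r ≤ r') (hr' : r' ≤ 1)
    (ha : 0 ≤ a) (hb : 0 ≤ b) :
    maxProd (fun t => (if t ≤ r' then b else 0) + (if t ≤ r then a else 0)) =
      max ((a + b) * r) (b * r') := by
  have hle : ∀ t ∈ Ioc (0 : ℝ) 1,
      ((if t ≤ r' then b else 0) + (if t ≤ r then a else 0)) * t ≤ max ((a + b) * r) (b * r') := by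
    intro t ht
    refine le_max_iff.2 ?_
    split_ifs with h₁ h₂ h₂
    · exact Or.inl (by nlinarith [ht.1])
    · exact Or.inr (by nlinarith [ht.1])
    · exact absurd (h₂.trans hrr') h₁
    · exact Or.inl (by nlinarith [ht.1])
  rcases le_total (b * r') ((a + b) * r) with h | h
  · exact maxProd_eq ⟨hr, hrr'.trans hr'⟩ (by simp [hrr', max_eq_left h, add_comm]) hle
  · refine maxProd_eq ⟨hr.trans_le hrr', hr'⟩ ?_ hle
    rcases hrr'.lt_or_eq with hlt | rfl
    · simp [not_le.2 hlt, max_eq_right h]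
    · obtain rfl : a = 0 := le_antisymm (by nlinarith) ha
      simp

theorem muStarM_eq_maxProd {X : Type*} [TopologicalSpace X] (A : Capacity (Capacity X))
    (F : Set X) : muStarM A F = maxProd fun t => A.toFun {c | t ≤ c.toFun F} :=
  rfl

end MaxProd

namespace Counterexample

noncomputable def boolCap (p : ℝ) (hp : p ∈ Icc (0 : ℝ) 1) : Capacity Bool :=
  Capacity.step (singleton_nonempty true) univ_nonempty hp

theorem boolCap_apply_true (p : ℝ) (hp : p ∈ Icc (0 : ℝ) 1) :
    (boolCap p hp).toFun {true} = p := by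
  simp [boolCap, Capacity.step, stepFun]

/-- The paper's level set `{a}_t`, with `a = true`. -/
abbrev level (t : ℝ) : Set (Capacity Bool) := {c | t ≤ c.toFun {true}}

theorem level_subset_level_iff {s t : ℝ} (hs : s ∈ Icc (0 : ℝ) 1) :
    level s ⊆ level t ↔ t ≤ s := by
  refine ⟨fun h => ?_, fun hts c hc => hts.trans hc⟩
  simpa [boolCap_apply_true] using h (show boolCap s hs ∈ level s by simp [boolCap_apply_true])

theorem level_nonempty {t : ℝ} (ht : t ≤ 1) : (level t).Nonempty :=
  ⟨boolCap 1 (right_mem_Icc.2 zero_le_one), by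
    rwa [mem_ofPred_eq, boolCap_apply_true]⟩

theorem level_ne_univ {t : ℝ} (ht : 0 < t) : level t ≠ univ := fun h =>
  have hmem : boolCap 0 (left_mem_Icc.2 zero_le_one) ∈ level t := h ▸ mem_univ _
  not_le.2 ht (boolCap_apply_true 0 _ ▸ hmem)

noncomputable def A₁ : Capacity (Capacity Bool) :=
  Capacity.step (S := level (1/2)) (T := level (1/2)) (t := 0) (level_nonempty (by norm_num))
    (level_nonempty (by norm_num)) (left_mem_Icc.2 zero_le_one)

noncomputable def A₂ : Capacity (Capacity Bool) :=
  Capacity.step (S := level 1) (T := univ) (t := 1/2) (level_nonempty le_rfl)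
    ((level_nonempty le_rfl).mono (subset_univ _)) ⟨by norm_num, by norm_num⟩

theorem A₁_apply (α : Set (Capacity Bool)) :
    A₁.toFun α = if level (1/2) ⊆ α then 1 else 0 := by
  simp [A₁, Capacity.step, stepFun]

theorem A₂_apply (α : Set (Capacity Bool)) :
    A₂.toFun α = if α = univ then 1 else if level 1 ⊆ α then 1/2 else 0 := by
  simp [A₂, Capacity.step, stepFun, univ_subset_iff]

theorem A₁_apply_level (t : ℝ) : A₁.toFun (level t) = if t ≤ 1/2 then 1 else 0 := by
  rw [A₁_apply, level_subset_level_iff ⟨by norm_num, by norm_num⟩]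

theorem A₂_apply_level {t : ℝ} (ht : t ∈ Ioc (0 : ℝ) 1) : A₂.toFun (level t) = 1/2 := by
  rw [A₂_apply, if_neg (level_ne_univ ht.1),
    if_pos ((level_subset_level_iff (right_mem_Icc.2 zero_le_one)).2 ht.2)]

theorem muStarM_A₁ : muStarM A₁ {true} = 1/2 := by
  rw [muStarM_eq_maxProd]
  simp only [A₁_apply_level]
  rw [maxProd_step ⟨by norm_num, by norm_num⟩ zero_le_one, one_mul]

theorem muStarM_A₂ : muStarM A₂ {true} = 1/2 := by
  rw [muStarM_eq_maxProd, maxProd_congr (g' := fun t => if t ≤ 1 then 1/2 else 0)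
    fun t ht => by simp [A₂_apply_level ht, ht.2]]
  rw [maxProd_step (right_mem_Ioc.2 one_pos) (by norm_num), mul_one]

noncomputable def L : Capacity (Capacity (Capacity Bool)) :=
  Capacity.convexDirac (w₁ := 1/2) (w₂ := 1/2) (by norm_num) (by norm_num) (by norm_num)
    (fun _ => Capacity.specializes_symm_of_isStronglyUSC (Capacity.isStronglyUSC_step _ _ _))
    (fun _ => Capacity.specializes_symm_of_isStronglyUSC (Capacity.isStronglyUSC_step _ _ _))
    (y₁ := A₁) (y₂ := A₂)

theorem L_apply_setOf (φ : Capacity (Capacity Bool) → ℝ) (s : ℝ) :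
    L.toFun {B | s ≤ φ B} = (if s ≤ φ A₁ then 1/2 else 0) + (if s ≤ φ A₂ then 1/2 else 0) := by
  simp [L, Capacity.convexDirac, convexDiracFun]

theorem maxProd_L_muStarM :
    maxProd (fun t => L.toFun {B | t ≤ muStarM B {true}}) = 1/2 := by
  simp only [L_apply_setOf, muStarM_A₁, muStarM_A₂]
  rw [maxProd_add_step (by norm_num) le_rfl (by norm_num) (by norm_num) (by norm_num)]
  norm_num

theorem maxProd_L_level {t : ℝ} (ht : t ∈ Ioc (0 : ℝ) 1) :
    maxProd (fun s => L.toFun {B | s ≤ B.toFun (level t)}) = if t ≤ 1/2 then 1/2 else 1/4 := by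
  simp only [L_apply_setOf, A₁_apply_level, A₂_apply_level ht]
  by_cases h : t ≤ 1/2
  · simp only [h, if_true]
    rw [maxProd_add_step (by norm_num) (by norm_num) le_rfl (by norm_num) (by norm_num)]
    norm_num
  · simp only [h, if_false]
    rw [maxProd_congr (g' := fun s => if s ≤ 1/2 then 1/2 else 0)
      fun s hs => by simp [not_le.2 hs.1], maxProd_step ⟨by norm_num, by norm_num⟩ (by norm_num)]
    norm_num

theorem maxProd_maxProd_L_level :
    maxProd (fun t => maxProd fun s => L.toFun {B | s ≤ B.toFun (level t)}) = 1/4 := by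
  rw [maxProd_congr (g' := fun t => (if t ≤ 1 then 1/4 else 0) + (if t ≤ 1/2 then 1/4 else 0))
    fun t ht => by simp only [maxProd_L_level ht, if_pos ht.2]; split_ifs <;> norm_num]
  rw [maxProd_add_step (by norm_num) (by norm_num) le_rfl (by norm_num) (by norm_num)]
  norm_num

end Counterexample

/-- μ• fails associativity on the full capacity functor: on the two-point discrete
space Bool (with a = true) there is a third-order capacity built from the Dirac
capacities at A1 and A2 on which the two iterated multiplications disagree. -/
theorem stmt8 :
    ∃ (A1 A2 : Capacity (Capacity Bool)) (L : Capacity (Capacity (Capacity Bool))),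
      (∀ α : Set (Capacity Bool), A1.toFun α =
        if {c : Capacity Bool | (1:ℝ)/2 ≤ c.toFun {true}} ⊆ α then 1 else 0) ∧
      (∀ α : Set (Capacity Bool), A2.toFun α =
        if α = Set.univ then 1
        else if {c : Capacity Bool | (1:ℝ) ≤ c.toFun {true}} ⊆ α then 1/2 else 0) ∧
      (∀ Λ : Set (Capacity (Capacity Bool)), L.toFun Λ =
        (1/2) * (if A1 ∈ Λ then 1 else 0) + (1/2) * (if A2 ∈ Λ then 1 else 0)) ∧
      (1/2 : ℝ) ≤ sSup ((fun t =>
          L.toFun {B : Capacity (Capacity Bool) | t ≤ muStarM B {true}} * t)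
            '' Set.Ioc (0:ℝ) 1) ∧
      sSup ((fun t =>
          sSup ((fun s =>
              L.toFun {B : Capacity (Capacity Bool) |
                  s ≤ B.toFun {c : Capacity Bool | t ≤ c.toFun {true}}} * s)
            '' Set.Ioc (0:ℝ) 1) * t) '' Set.Ioc (0:ℝ) 1) = 1/4 :=
  open Counterexample in
  ⟨A₁, A₂, L, A₁_apply, A₂_apply, fun _ => rfl, maxProd_L_muStarM.ge, maxProd_maxProd_L_level⟩
end

section
/- Let X be a compact Hausdorff space, ν a capacity on X, λ ∈ [0,1], and φ ∈ C(X,I). Define υ(φ) = sup{ν(φ^{-1}([s,1])) · s : s ∈ (0,1]}. Then υ(λ·φ) = λ·υ(φ). -/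
open Set TopologicalSpace

/-- The max-product fuzzy integral of a [0,1]-valued function against a capacity. -/
noncomputable def ups {X : Type*} [TopologicalSpace X] (f : Capacity X) (φ : X → ℝ) : ℝ :=
  sSup ((fun s => f.toFun {x : X | s ≤ φ x} * s) '' Set.Ioc (0:ℝ) 1)

/-! Scaling `φ` by `l > 0` rescales the levels: `{s ≤ l • φ} = {s / l ≤ φ}`, so the term of
`ups ν (l • φ)` at level `s ≤ l` is `l` times the term of `ups ν φ` at level `s / l`, while the
levels `s > l` contribute `0` because `l • φ ≤ l`. -/

section ups

variable {X : Type*} [TopologicalSpace X] (ν : Capacity X) (φ : X → ℝ)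

lemma ups_bddAbove :
    BddAbove ((fun s => ν.toFun {x : X | s ≤ φ x} * s) '' Ioc (0:ℝ) 1) := by
  refine ⟨1, ?_⟩
  rintro _ ⟨s, hs, rfl⟩
  exact mul_le_one₀ (ν.le_one _) hs.1.le hs.2

lemma le_ups {s : ℝ} (hs : s ∈ Ioc (0:ℝ) 1) : ν.toFun {x : X | s ≤ φ x} * s ≤ ups ν φ :=
  le_csSup (ups_bddAbove ν φ) ⟨s, hs, rfl⟩

lemma ups_nonneg : 0 ≤ ups ν φ :=
  (mul_nonneg (ν.nonneg _) zero_le_one).trans (le_ups ν φ ⟨one_pos, le_rfl⟩)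

variable {ν φ} in
lemma ups_le {c : ℝ} (h : ∀ s ∈ Ioc (0:ℝ) 1, ν.toFun {x : X | s ≤ φ x} * s ≤ c) :
    ups ν φ ≤ c :=
  csSup_le ((nonempty_Ioc.mpr zero_lt_one).image _) (by rintro _ ⟨s, hs, rfl⟩; exact h s hs)

lemma ups_const_mul_le {l : ℝ} (hl : 0 ≤ l) (hφ : ∀ x, φ x ≤ 1) :
    ups ν (fun x => l * φ x) ≤ l * ups ν φ := by
  refine ups_le fun s hs => ?_
  by_cases hsl : s ≤ l
  · have hl0 : 0 < l := hs.1.trans_le hsl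
    have hlevel : {x : X | s ≤ l * φ x} = {x : X | s / l ≤ φ x} := by
      ext x
      exact (div_le_iff₀' hl0).symm
    calc ν.toFun {x : X | s ≤ l * φ x} * s
        = l * (ν.toFun {x : X | s / l ≤ φ x} * (s / l)) := by rw [hlevel]; field_simp
      _ ≤ l * ups ν φ := by
        gcongr
        exact le_ups ν φ ⟨div_pos hs.1 hl0, (div_le_one hl0).mpr hsl⟩
  · have hempty : {x : X | s ≤ l * φ x} = ∅ :=
      eq_empty_of_forall_notMem fun x hx =>
        hsl (hx.trans (mul_le_of_le_one_right hl (hφ x)))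
    rw [hempty, ν.empty', zero_mul]
    exact mul_nonneg hl (ups_nonneg ν φ)

lemma mul_ups_le_ups_const_mul {l : ℝ} (hl : l ∈ Icc (0:ℝ) 1) :
    l * ups ν φ ≤ ups ν (fun x => l * φ x) := by
  rcases hl.1.eq_or_lt with rfl | hl0
  · rw [zero_mul]
    exact ups_nonneg ν _
  rw [← le_div_iff₀' hl0]
  refine ups_le fun t ht => ?_
  have hlevel : {x : X | l * t ≤ l * φ x} = {x : X | t ≤ φ x} := by
    ext x
    exact mul_le_mul_iff_of_pos_left hl0
  rw [le_div_iff₀' hl0, mul_left_comm, ← hlevel]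
  exact le_ups ν _ ⟨mul_pos hl0 ht.1, mul_le_one₀ hl.2 ht.1.le ht.2⟩

end ups

theorem stmt11_general {X : Type*} [TopologicalSpace X]
    (ν : Capacity X) (l : ℝ) (hl : l ∈ Set.Icc (0:ℝ) 1)
    (φ : X → ℝ) (hφ : ∀ x, φ x ∈ Set.Icc (0:ℝ) 1) :
    ups ν (fun x => l * φ x) = l * ups ν φ :=
  le_antisymm (ups_const_mul_le ν φ hl.1 fun x => (hφ x).2) (mul_ups_le_ups_const_mul ν φ hl)

/-- Homogeneity: υ(λ·φ) = λ·υ(φ). -/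
theorem stmt11 {X : Type*} [TopologicalSpace X] [CompactSpace X] [T2Space X]
    (ν : Capacity X) (l : ℝ) (hl : l ∈ Set.Icc (0:ℝ) 1)
    (φ : X → ℝ) (hφc : Continuous φ) (hφ : ∀ x, φ x ∈ Set.Icc (0:ℝ) 1) :
    ups ν (fun x => l * φ x) = l * ups ν φ :=
  stmt11_general ν l hl φ hφ
end

section
/- Let X be a compact Hausdorff space and ν a possibility capacity on X. Define υ(φ) = sup{ν(φ^{-1}([s,1])) · s : s ∈ (0,1]} for φ ∈ C(X,I). Then υ(max(φ,ψ)) = max{υ(φ), υ(ψ)} for all φ, ψ ∈ C(X,I). -/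
open Set TopologicalSpace

/-- Maxitivity of the fuzzy integral: υ(max(φ,ψ)) = max(υ(φ), υ(ψ)). -/
theorem stmt12 {X : Type*} [TopologicalSpace X] [CompactSpace X] [T2Space X]
    (ν : Capacity X) (hν : IsPossibility ν)
    (φ ψ : X → ℝ) (hφc : Continuous φ) (hψc : Continuous ψ)
    (hφ : ∀ x, φ x ∈ Set.Icc (0:ℝ) 1) (hψ : ∀ x, ψ x ∈ Set.Icc (0:ℝ) 1) :
    ups ν (fun x => max (φ x) (ψ x)) = max (ups ν φ) (ups ν ψ) := by
  have key : ∀ s ∈ Set.Ioc (0:ℝ) 1,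
      ν.toFun {x : X | s ≤ max (φ x) (ψ x)} * s
        = max (ν.toFun {x : X | s ≤ φ x} * s) (ν.toFun {x : X | s ≤ ψ x} * s) := by
    intro s hs
    have hA : IsClosed {x : X | s ≤ φ x} := isClosed_le continuous_const hφc
    have hB : IsClosed {x : X | s ≤ ψ x} := isClosed_le continuous_const hψc
    have hset : {x : X | s ≤ max (φ x) (ψ x)} = {x : X | s ≤ φ x} ∪ {x : X | s ≤ ψ x} := by
      ext x; simp [le_max_iff]
    rw [hset, hν hA hB, max_mul_of_nonneg _ _ (le_of_lt hs.1)]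
  have hne : (Set.Ioc (0:ℝ) 1).Nonempty := ⟨1, by norm_num⟩
  have bdd : ∀ (f : X → ℝ),
      BddAbove ((fun s => ν.toFun {x : X | s ≤ f x} * s) '' Set.Ioc (0:ℝ) 1) := by
    intro f
    refine ⟨1, ?_⟩
    rintro _ ⟨s, hs, rfl⟩
    calc ν.toFun {x : X | s ≤ f x} * s ≤ 1 * 1 := by
          apply mul_le_mul (ν.le_one _) hs.2 (le_of_lt hs.1) zero_le_one
      _ = 1 := one_mul 1
  have bddmax : BddAbove ((fun x => max (φ x) (ψ x)) '' Set.univ) := by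
    exact ⟨1, by rintro _ ⟨x, _, rfl⟩; exact max_le (hφ x).2 (hψ x).2⟩
  unfold ups
  have himg : ((fun s => ν.toFun {x : X | s ≤ max (φ x) (ψ x)} * s) '' Set.Ioc (0:ℝ) 1)
      = ((fun s => max (ν.toFun {x : X | s ≤ φ x} * s) (ν.toFun {x : X | s ≤ ψ x} * s)) ''
        Set.Ioc (0:ℝ) 1) := by
    apply Set.image_congr
    intro s hs; exact key s hs
  rw [himg]
  apply le_antisymm
  · apply csSup_le (hne.image _)
    rintro _ ⟨s, hs, rfl⟩
    apply max_le_max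
    · exact le_csSup (bdd φ) ⟨s, hs, rfl⟩
    · exact le_csSup (bdd ψ) ⟨s, hs, rfl⟩
  · have bddm : BddAbove ((fun s => max (ν.toFun {x : X | s ≤ φ x} * s)
        (ν.toFun {x : X | s ≤ ψ x} * s)) '' Set.Ioc (0:ℝ) 1) := by
      refine ⟨1, ?_⟩
      rintro _ ⟨s, hs, rfl⟩
      refine max_le ?_ ?_ <;>
        exact le_trans (mul_le_mul (ν.le_one _) hs.2 (le_of_lt hs.1) zero_le_one) (by norm_num)
    apply max_le
    · apply csSup_le (hne.image _)
      rintro _ ⟨s, hs, rfl⟩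
      exact le_trans (le_max_left _ _) (le_csSup bddm ⟨s, hs, rfl⟩)
    · apply csSup_le (hne.image _)
      rintro _ ⟨s, hs, rfl⟩
      exact le_trans (le_max_right _ _) (le_csSup bddm ⟨s, hs, rfl⟩)
end

section
/- Let X be a compact Hausdorff space and υ : C(X,I) → I a functional satisfying: (1) υ(1_X) = 1; (2) υ(λφ) = λυ(φ) for all λ ∈ I, φ ∈ C(X,I); (3) υ(max(φ,ψ)) = max{υ(φ),υ(ψ)}. For nonempty closed A ⊆ X define ν(A) = inf{υ(φ) : φ ∈ C(X,I), φ ≡ 1 on A}, and ν(∅) = 0. Then ν is upper-semicontinuous: if ν(A) < η then there is an open U ⊇ A with ν(K) < η for every compact K ⊆ U. -/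
open Set TopologicalSpace
open scoped Classical

/-- The capacity induced by a functional: ν(A) = inf of u over functions equal to 1 on A. -/
noncomputable def nuOf {X : Type*} [TopologicalSpace X] (u : C(X, ℝ) → ℝ) (A : Set X) : ℝ :=
  if A = ∅ then 0
  else sInf (u '' {φ : C(X, ℝ) | (∀ x, φ x ∈ Set.Icc (0:ℝ) 1) ∧ ∀ a ∈ A, φ a = 1})

lemma u_zero {X : Type*} [TopologicalSpace X] (u : C(X, ℝ) → ℝ)
    (h2 : ∀ l : ℝ, l ∈ Set.Icc (0:ℝ) 1 → ∀ φ : C(X, ℝ),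
      (∀ x, φ x ∈ Set.Icc (0:ℝ) 1) → u (l • φ) = l * u φ) : u 0 = 0 := by
  have := h2 0 ⟨le_rfl, zero_le_one⟩ (ContinuousMap.const X 1)
    (fun x => ⟨zero_le_one, le_rfl⟩)
  simpa using this

lemma u_nonneg {X : Type*} [TopologicalSpace X] (u : C(X, ℝ) → ℝ)
    (h2 : ∀ l : ℝ, l ∈ Set.Icc (0:ℝ) 1 → ∀ φ : C(X, ℝ),
      (∀ x, φ x ∈ Set.Icc (0:ℝ) 1) → u (l • φ) = l * u φ)
    (h3 : ∀ φ ψ : C(X, ℝ), (∀ x, φ x ∈ Set.Icc (0:ℝ) 1) → (∀ x, ψ x ∈ Set.Icc (0:ℝ) 1) →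
      u (φ ⊔ ψ) = max (u φ) (u ψ))
    (φ : C(X, ℝ)) (hφ : ∀ x, φ x ∈ Set.Icc (0:ℝ) 1) : 0 ≤ u φ := by
  have h0 : ∀ x, (0 : C(X,ℝ)) x ∈ Set.Icc (0:ℝ) 1 := fun x => ⟨le_rfl, zero_le_one⟩
  have key := h3 φ 0 hφ h0
  have heq : φ ⊔ 0 = φ := by
    ext x
    exact max_eq_left (hφ x).1
  rw [heq, u_zero u h2] at key
  calc (0:ℝ) ≤ max (u φ) 0 := le_max_right _ _
    _ = u φ := key.symm

lemma nuOf_nonneg {X : Type*} [TopologicalSpace X] (u : C(X, ℝ) → ℝ)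
    (h2 : ∀ l : ℝ, l ∈ Set.Icc (0:ℝ) 1 → ∀ φ : C(X, ℝ),
      (∀ x, φ x ∈ Set.Icc (0:ℝ) 1) → u (l • φ) = l * u φ)
    (h3 : ∀ φ ψ : C(X, ℝ), (∀ x, φ x ∈ Set.Icc (0:ℝ) 1) → (∀ x, ψ x ∈ Set.Icc (0:ℝ) 1) →
      u (φ ⊔ ψ) = max (u φ) (u ψ))
    (A : Set X) : 0 ≤ nuOf u A := by
  unfold nuOf
  split
  · exact le_rfl
  · apply Real.sInf_nonneg
    rintro x ⟨φ, ⟨hφ, -⟩, rfl⟩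
    exact u_nonneg u h2 h3 φ hφ

/-- The set function induced by a normalized, homogeneous, maxitive functional
is upper-semicontinuous. -/
theorem stmt14 {X : Type*} [TopologicalSpace X] [CompactSpace X] [T2Space X]
    (u : C(X, ℝ) → ℝ)
    (h1 : u (ContinuousMap.const X 1) = 1)
    (h2 : ∀ l : ℝ, l ∈ Set.Icc (0:ℝ) 1 → ∀ φ : C(X, ℝ),
      (∀ x, φ x ∈ Set.Icc (0:ℝ) 1) → u (l • φ) = l * u φ)
    (h3 : ∀ φ ψ : C(X, ℝ), (∀ x, φ x ∈ Set.Icc (0:ℝ) 1) → (∀ x, ψ x ∈ Set.Icc (0:ℝ) 1) →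
      u (φ ⊔ ψ) = max (u φ) (u ψ)) :
    ∀ (A : Set X) (a : ℝ), IsClosed A → nuOf u A < a →
      ∃ U : Set X, IsOpen U ∧ A ⊆ U ∧ ∀ K : Set X, IsCompact K → K ⊆ U → nuOf u K < a := by
  intro A a hA hlt
  have ha : 0 < a := lt_of_le_of_lt (nuOf_nonneg u h2 h3 A) hlt
  by_cases hAe : A = ∅
  · refine ⟨∅, isOpen_empty, by simp [hAe], ?_⟩
    intro K hK hKU
    have : K = ∅ := Set.subset_empty_iff.mp hKU
    simpa [nuOf, this] using ha
  · rw [nuOf, if_neg hAe] at hlt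
    have hbdd : BddBelow (u '' {φ : C(X, ℝ) | (∀ x, φ x ∈ Set.Icc (0:ℝ) 1) ∧ ∀ a ∈ A, φ a = 1}) := by
      refine ⟨0, ?_⟩
      rintro x ⟨φ, ⟨hφ, -⟩, rfl⟩
      exact u_nonneg u h2 h3 φ hφ
    obtain ⟨y, ⟨φ, ⟨hφ, hφA⟩, rfl⟩, hy⟩ := exists_lt_of_csInf_lt
      (by
        refine ⟨u (ContinuousMap.const X 1), ?_⟩
        exact ⟨_, ⟨fun x => ⟨zero_le_one, le_rfl⟩, fun a _ => rfl⟩, rfl⟩) hlt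
    -- pick t ∈ (max (u φ / a) (1/2), 1)
    have hφa : u φ / a < 1 := (div_lt_one ha).mpr hy
    obtain ⟨t, ht1, ht2⟩ := exists_between (show max (u φ / a) (1/2) < 1 by
      exact max_lt hφa (by norm_num))
    have htpos : (0:ℝ) < t := lt_trans (by norm_num : (0:ℝ) < 1/2)
      (lt_of_le_of_lt (le_max_right _ _) ht1)
    have htlt : u φ < t * a := by
      have : u φ / a < t := lt_of_le_of_lt (le_max_left _ _) ht1
      calc u φ = (u φ / a) * a := by field_simp
        _ < t * a := by exact mul_lt_mul_of_pos_right this ha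
    refine ⟨φ ⁻¹' Set.Ioi t, isOpen_Ioi.preimage φ.continuous, ?_, ?_⟩
    · intro x hx
      simp only [Set.mem_preimage, Set.mem_Ioi]
      rw [hφA x hx]
      exact ht2
    · intro K hK hKU
      by_cases hKe : K = ∅
      · simpa [nuOf, hKe] using ha
      · set ψ : C(X,ℝ) := (t⁻¹ • φ) ⊓ 1 with hψ
        have hψval : ∀ x, ψ x = min (t⁻¹ * φ x) 1 := fun x => rfl
        have hψmem : ∀ x, ψ x ∈ Set.Icc (0:ℝ) 1 := by
          intro x
          rw [hψval]
          constructor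
          · exact le_min (mul_nonneg (inv_nonneg.mpr htpos.le) (hφ x).1) zero_le_one
          · exact min_le_right _ _
        have hψK : ∀ x ∈ K, ψ x = 1 := by
          intro x hx
          have hxU : t < φ x := hKU hx
          rw [hψval]
          refine min_eq_right ?_
          rw [← div_eq_inv_mul, le_div_iff₀ htpos, one_mul]
          exact hxU.le
        have htψmem : ∀ x, (t • ψ) x ∈ Set.Icc (0:ℝ) 1 := by
          intro x
          have := hψmem x
          simp only [ContinuousMap.smul_apply, smul_eq_mul]
          constructor
          · exact mul_nonneg htpos.le this.1
          · calc t * ψ x ≤ t * 1 := by nlinarith [this.2]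
              _ ≤ 1 := by linarith [ht2]
        have hsup : φ ⊔ (t • ψ) = φ := by
          ext x
          simp only [ContinuousMap.sup_apply, ContinuousMap.smul_apply, smul_eq_mul]
          refine max_eq_left ?_
          rw [hψval]
          have : min (t⁻¹ * φ x) 1 ≤ t⁻¹ * φ x := min_le_left _ _
          calc t * min (t⁻¹ * φ x) 1 ≤ t * (t⁻¹ * φ x) := by nlinarith
            _ = φ x := by field_simp
        have hkey := h3 φ (t • ψ) hφ htψmem
        rw [hsup] at hkey
        have hle : u (t • ψ) ≤ u φ := by
          rw [hkey]
          exact le_max_right _ _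
        have hhom : u (t • ψ) = t * u ψ :=
          h2 t ⟨htpos.le, ht2.le⟩ ψ hψmem
        have huψ : u ψ < a := by
          rw [hhom] at hle
          have : t * u ψ < t * a := lt_of_le_of_lt hle htlt
          exact lt_of_mul_lt_mul_left this htpos.le
        have hnu : nuOf u K ≤ u ψ := by
          rw [nuOf, if_neg hKe]
          refine csInf_le ?_ ⟨ψ, ⟨hψmem, hψK⟩, rfl⟩
          refine ⟨0, ?_⟩
          rintro x ⟨χ, ⟨hχ, -⟩, rfl⟩
          exact u_nonneg u h2 h3 χ hχ
        exact lt_of_le_of_lt hnu huψ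
end

section
/- Let X be a compact Hausdorff space and υ : C(X,I) → I a functional satisfying υ(1_X)=1, υ(λφ)=λυ(φ), and υ(max(φ,ψ)) = max{υ(φ),υ(ψ)}. Define ν(A) = inf{υ(φ) : φ ∈ C(X,I), φ ≡ 1 on A} for nonempty closed A, ν(∅)=0. Then ν(A ∪ B) = max{ν(A), ν(B)} for all closed A, B ⊆ X. -/
open Set TopologicalSpace
open scoped Classical

/-- The set function induced by a normalized, homogeneous, maxitive functional
is maxitive on closed sets. -/
theorem stmt15 {X : Type*} [TopologicalSpace X] [CompactSpace X] [T2Space X]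
    (u : C(X, ℝ) → ℝ)
    (h1 : u (ContinuousMap.const X 1) = 1)
    (h2 : ∀ l : ℝ, l ∈ Set.Icc (0:ℝ) 1 → ∀ φ : C(X, ℝ),
      (∀ x, φ x ∈ Set.Icc (0:ℝ) 1) → u (l • φ) = l * u φ)
    (h3 : ∀ φ ψ : C(X, ℝ), (∀ x, φ x ∈ Set.Icc (0:ℝ) 1) → (∀ x, ψ x ∈ Set.Icc (0:ℝ) 1) →
      u (φ ⊔ ψ) = max (u φ) (u ψ)) :
    ∀ A B : Set X, IsClosed A → IsClosed B →
      nuOf u (A ∪ B) = max (nuOf u A) (nuOf u B) := by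
  classical
  -- basic facts about u
  have hone : ∀ x, (ContinuousMap.const X (1:ℝ)) x ∈ Set.Icc (0:ℝ) 1 :=
    fun x => ⟨zero_le_one, le_refl 1⟩
  have hu0 : u 0 = 0 := by
    have h := h2 0 ⟨le_refl 0, zero_le_one⟩ (ContinuousMap.const X 1) hone
    have h0 : (0:ℝ) • (ContinuousMap.const X (1:ℝ)) = 0 := by
      ext x; simp
    rw [h0] at h
    simpa using h
  have hunn : ∀ φ : C(X,ℝ), (∀ x, φ x ∈ Set.Icc (0:ℝ) 1) → 0 ≤ u φ := by
    intro φ hφ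
    have h0adm : ∀ x, (0 : C(X,ℝ)) x ∈ Set.Icc (0:ℝ) 1 :=
      fun x => ⟨le_refl 0, zero_le_one⟩
    have h := h3 φ 0 hφ h0adm
    have heq : φ ⊔ 0 = φ := by
      ext x
      simp [sup_eq_left.mpr (hφ x).1]
    rw [heq, hu0] at h
    calc (0:ℝ) ≤ max (u φ) 0 := le_max_right _ _
      _ = u φ := h.symm
  -- the image sets
  set T : Set X → Set ℝ := fun C =>
    u '' {φ : C(X, ℝ) | (∀ x, φ x ∈ Set.Icc (0:ℝ) 1) ∧ ∀ a ∈ C, φ a = 1} with hT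
  have hTne : ∀ C : Set X, (T C).Nonempty := by
    intro C
    exact ⟨u (ContinuousMap.const X 1), ⟨ContinuousMap.const X 1, ⟨hone, fun a _ => rfl⟩, rfl⟩⟩
  have hTbdd : ∀ C : Set X, BddBelow (T C) := by
    intro C
    refine ⟨0, ?_⟩
    rintro x ⟨φ, ⟨hφ, _⟩, rfl⟩
    exact hunn φ hφ
  have hnu : ∀ C : Set X, C ≠ ∅ → nuOf u C = sInf (T C) := by
    intro C hC
    simp [nuOf, hC, hT]
  have hnunn : ∀ C : Set X, 0 ≤ nuOf u C := by
    intro C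
    by_cases hC : C = ∅
    · simp [nuOf, hC]
    · rw [hnu C hC]
      refine le_csInf (hTne C) ?_
      rintro x ⟨φ, ⟨hφ, _⟩, rfl⟩
      exact hunn φ hφ
  intro A B hA hB
  by_cases hAe : A = ∅
  · subst hAe
    rw [Set.empty_union]
    have h0 : nuOf u (∅ : Set X) = 0 := by simp [nuOf]
    rw [h0]
    exact (sup_eq_right.mpr (hnunn B)).symm
  by_cases hBe : B = ∅
  · subst hBe
    rw [Set.union_empty]
    have h0 : nuOf u (∅ : Set X) = 0 := by simp [nuOf]
    rw [h0]
    exact (sup_eq_left.mpr (hnunn A)).symm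
  have hABe : A ∪ B ≠ ∅ := by
    intro h
    exact hAe (Set.subset_empty_iff.mp (h ▸ Set.subset_union_left))
  rw [hnu _ hABe, hnu _ hAe, hnu _ hBe]
  refine le_antisymm ?_ ?_
  · -- sInf (T (A ∪ B)) ≤ max
    refine le_of_forall_pos_le_add ?_
    intro ε hε
    obtain ⟨a, ⟨φ, ⟨hφadm, hφA⟩, rfl⟩, haε⟩ := Real.lt_sInf_add_pos (hTne A) hε
    obtain ⟨b, ⟨ψ, ⟨hψadm, hψB⟩, rfl⟩, hbε⟩ := Real.lt_sInf_add_pos (hTne B) hε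
    have hsadm : ∀ x, (φ ⊔ ψ) x ∈ Set.Icc (0:ℝ) 1 := by
      intro x
      simp only [ContinuousMap.sup_apply]
      exact ⟨le_sup_of_le_left (hφadm x).1, sup_le (hφadm x).2 (hψadm x).2⟩
    have hs1 : ∀ a ∈ A ∪ B, (φ ⊔ ψ) a = 1 := by
      intro a ha
      simp only [ContinuousMap.sup_apply]
      rcases ha with ha | ha
      · rw [hφA a ha]
        exact sup_eq_left.mpr (hψadm a).2
      · rw [hψB a ha]
        exact sup_eq_right.mpr (hφadm a).2
    have hmem : u (φ ⊔ ψ) ∈ T (A ∪ B) := ⟨φ ⊔ ψ, ⟨hsadm, hs1⟩, rfl⟩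
    calc sInf (T (A ∪ B)) ≤ u (φ ⊔ ψ) := csInf_le (hTbdd _) hmem
      _ = max (u φ) (u ψ) := h3 φ ψ hφadm hψadm
      _ ≤ max (sInf (T A) + ε) (sInf (T B) + ε) :=
          max_le_max haε.le hbε.le
      _ = max (sInf (T A)) (sInf (T B)) + ε := by
          rw [max_add_add_right]
  · -- max ≤ sInf (T (A ∪ B))
    have hsub1 : T (A ∪ B) ⊆ T A := by
      rintro x ⟨φ, ⟨hφadm, hφ1⟩, rfl⟩
      exact ⟨φ, ⟨hφadm, fun a ha => hφ1 a (Or.inl ha)⟩, rfl⟩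
    have hsub2 : T (A ∪ B) ⊆ T B := by
      rintro x ⟨φ, ⟨hφadm, hφ1⟩, rfl⟩
      exact ⟨φ, ⟨hφadm, fun a ha => hφ1 a (Or.inr ha)⟩, rfl⟩
    exact max_le (csInf_le_csInf (hTbdd A) (hTne _) hsub1)
      (csInf_le_csInf (hTbdd B) (hTne _) hsub2)
end

section
/- Let X be a compact Hausdorff space and υ : C(X,I) → I satisfying υ(1_X)=1, υ(λφ)=λυ(φ) for λ ∈ I, and υ(max(φ,ψ))=max{υ(φ),υ(ψ)}. Let ν(A) = inf{υ(χ) : χ ∈ C(X,I), χ ≡ 1 on A} for closed nonempty A, ν(∅)=0. Then for every φ ∈ C(X,I): sup{ν(φ^{-1}([t,1])) · t : t ∈ (0,1]} = υ(φ). In particular, every such functional is represented by a possibility capacity via the max-product fuzzy integral. -/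
/-!
For `0 < t ≤ 1` the function `χ = t⁻¹ • min φ t` equals `1` on `{φ ≥ t}` and satisfies
`t • χ ≤ φ`, so monotonicity and homogeneity give `ν {φ ≥ t} * t ≤ u φ`. Conversely, let `s`
bound every `ν {φ ≥ t} * t` and let `0 < δ < 1`. Choosing `χᵢ` equal to `1` on `{φ ≥ δ^(i+1)}`
with `u χᵢ` close to `ν {φ ≥ δ^(i+1)}`, we get `φ ≤ max (δ^0 • χ₀, …, δ^(n-1) • χₙ₋₁, δ^n)`,
and maxitivity bounds `δ * u φ` by `s` up to errors that vanish as `n → ∞`. Letting `δ → 1`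
gives `u φ ≤ s`.
-/

open Set TopologicalSpace
open scoped Classical

section

open Filter Topology

variable {X : Type*} [TopologicalSpace X]

def IsUnitValued (φ : C(X, ℝ)) : Prop := ∀ x, φ x ∈ Icc (0 : ℝ) 1

namespace IsUnitValued

lemma zero : IsUnitValued (0 : C(X, ℝ)) := fun _ => by simp

lemma const {l : ℝ} (hl : l ∈ Icc (0 : ℝ) 1) : IsUnitValued (ContinuousMap.const X l) :=
  fun _ => hl

lemma sup {φ ψ : C(X, ℝ)} (hφ : IsUnitValued φ) (hψ : IsUnitValued ψ) :
    IsUnitValued (φ ⊔ ψ) :=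
  fun x => ⟨le_max_of_le_left (hφ x).1, max_le (hφ x).2 (hψ x).2⟩

lemma smul {φ : C(X, ℝ)} {l : ℝ} (hl : l ∈ Icc (0 : ℝ) 1) (hφ : IsUnitValued φ) :
    IsUnitValued (l • φ) :=
  fun x => ⟨mul_nonneg hl.1 (hφ x).1, mul_le_one₀ hl.2 (hφ x).1 (hφ x).2⟩

end IsUnitValued

lemma exists_smul_le_of_mem_Ioc {φ : C(X, ℝ)} (hφ : IsUnitValued φ) {t : ℝ}
    (ht : t ∈ Ioc (0 : ℝ) 1) :
    ∃ χ : C(X, ℝ), IsUnitValued χ ∧ (∀ x, t ≤ φ x → χ x = 1) ∧ t • χ ≤ φ := by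
  refine ⟨t⁻¹ • (φ ⊓ ContinuousMap.const X t), fun x => ?_, fun x hx => ?_,
    ContinuousMap.le_def.2 fun x => ?_⟩
  all_goals simp only [ContinuousMap.smul_apply, ContinuousMap.inf_apply,
    ContinuousMap.const_apply, smul_eq_mul]
  · exact ⟨mul_nonneg (inv_nonneg.2 ht.1.le) (le_min (hφ x).1 ht.1.le),
      inv_mul_le_one_of_le₀ (min_le_right _ _) ht.1.le⟩
  · rw [min_eq_right hx, inv_mul_cancel₀ ht.1.ne']
  · rw [mul_inv_cancel_left₀ ht.1.ne']
    exact min_le_left _ _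

structure IsMaxitiveFunctional (u : C(X, ℝ) → ℝ) : Prop where
  map_smul : ∀ l ∈ Icc (0 : ℝ) 1, ∀ φ, IsUnitValued φ → u (l • φ) = l * u φ
  map_sup : ∀ φ ψ, IsUnitValued φ → IsUnitValued ψ → u (φ ⊔ ψ) = max (u φ) (u ψ)

namespace IsMaxitiveFunctional

variable {u : C(X, ℝ) → ℝ} (hu : IsMaxitiveFunctional u)
include hu

lemma map_zero : u 0 = 0 := by
  simpa using hu.map_smul 0 ⟨le_rfl, zero_le_one⟩ 0 .zero

lemma mono {φ ψ : C(X, ℝ)} (hφ : IsUnitValued φ) (hψ : IsUnitValued ψ) (h : φ ≤ ψ) :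
    u φ ≤ u ψ := by
  simpa [sup_eq_right.mpr h] using hu.map_sup φ ψ hφ hψ

lemma nonneg {φ : C(X, ℝ)} (hφ : IsUnitValued φ) : 0 ≤ u φ :=
  hu.map_zero ▸ hu.mono .zero hφ fun x => (hφ x).1

lemma map_const {l : ℝ} (hl : l ∈ Icc (0 : ℝ) 1) :
    u (ContinuousMap.const X l) = l * u (ContinuousMap.const X 1) := by
  rw [← hu.map_smul l hl _ (.const ⟨zero_le_one, le_rfl⟩)]
  congr 1
  ext
  simp

lemma nuOf_le {A : Set X} {χ : C(X, ℝ)} (hχ : IsUnitValued χ) (h1 : ∀ a ∈ A, χ a = 1) :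
    nuOf u A ≤ u χ := by
  unfold nuOf
  split_ifs
  · exact hu.nonneg hχ
  · refine csInf_le ⟨0, ?_⟩ ⟨χ, ⟨hχ, h1⟩, rfl⟩
    rintro _ ⟨ψ, ⟨hψ, -⟩, rfl⟩
    exact hu.nonneg hψ

lemma nuOf_nonneg (A : Set X) : 0 ≤ nuOf u A := by
  unfold nuOf
  split_ifs
  · exact le_rfl
  · refine Real.sInf_nonneg ?_
    rintro _ ⟨ψ, ⟨hψ, -⟩, rfl⟩
    exact hu.nonneg hψ

lemma exists_lt_nuOf_add (A : Set X) {ε : ℝ} (hε : 0 < ε) :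
    ∃ χ : C(X, ℝ), IsUnitValued χ ∧ (∀ a ∈ A, χ a = 1) ∧ u χ < nuOf u A + ε := by
  rcases A.eq_empty_or_nonempty with rfl | hA
  · exact ⟨0, .zero, by simp, by simpa [nuOf, hu.map_zero] using hε⟩
  rw [nuOf, if_neg hA.ne_empty]
  set S := {φ : C(X, ℝ) | (∀ x, φ x ∈ Icc (0 : ℝ) 1) ∧ ∀ a ∈ A, φ a = 1}
  have hone : ContinuousMap.const X (1 : ℝ) ∈ S :=
    ⟨IsUnitValued.const ⟨zero_le_one, le_rfl⟩, fun _ _ => rfl⟩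
  obtain ⟨_, ⟨χ, ⟨hχ, h1⟩, rfl⟩, hlt⟩ :=
    exists_lt_of_csInf_lt (s := u '' S) ⟨_, _, hone, rfl⟩ (lt_add_of_pos_right _ hε)
  exact ⟨χ, hχ, h1, hlt⟩

lemma nuOf_mul_le {φ : C(X, ℝ)} (hφ : IsUnitValued φ) {t : ℝ} (ht : t ∈ Ioc (0 : ℝ) 1) :
    nuOf u {x | t ≤ φ x} * t ≤ u φ := by
  obtain ⟨χ, hχ, h1, hle⟩ := exists_smul_le_of_mem_Ioc hφ ht
  have ht' : t ∈ Icc (0 : ℝ) 1 := Ioc_subset_Icc_self ht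
  calc nuOf u {x | t ≤ φ x} * t ≤ u χ * t :=
        mul_le_mul_of_nonneg_right (hu.nuOf_le hχ h1) ht.1.le
    _ = u (t • χ) := by rw [hu.map_smul t ht' χ hχ, mul_comm]
    _ ≤ u φ := hu.mono (hχ.smul ht') hφ hle

variable {φ : C(X, ℝ)} {s : ℝ} (hφ : IsUnitValued φ)
  (hs : ∀ t ∈ Ioc (0 : ℝ) 1, nuOf u {x | t ≤ φ x} * t ≤ s)
include hφ hs

omit hφ in
lemma nonneg_of_forall_nuOf_mul_le : 0 ≤ s :=
  (mul_one (nuOf u _) ▸ hu.nuOf_nonneg _).trans (hs 1 ⟨one_pos, le_rfl⟩)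

lemma exists_le_max_pow_of_forall_nuOf_mul_le {δ ε : ℝ} (hδ : δ ∈ Ioo (0 : ℝ) 1)
    (hε : 0 < ε) (n : ℕ) :
    ∃ g : C(X, ℝ), IsUnitValued g ∧ (∀ x, φ x ≤ max (g x) (δ ^ n)) ∧ δ * u g ≤ s + ε := by
  induction n with
  | zero =>
    refine ⟨0, .zero, fun x => by simp [(hφ x).2], ?_⟩
    rw [hu.map_zero, mul_zero]
    linarith [hu.nonneg_of_forall_nuOf_mul_le hs]
  | succ n ih =>
    obtain ⟨g, hg, hφg, hgu⟩ := ih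
    obtain ⟨χ, hχ, h1, hχu⟩ := hu.exists_lt_nuOf_add {x | δ ^ (n + 1) ≤ φ x} hε
    have hδn : δ ^ n ∈ Icc (0 : ℝ) 1 := ⟨pow_nonneg hδ.1.le n, pow_le_one₀ hδ.1.le hδ.2.le⟩
    have hδn1 : δ ^ (n + 1) ∈ Ioc (0 : ℝ) 1 :=
      ⟨pow_pos hδ.1 _, pow_le_one₀ hδ.1.le hδ.2.le⟩
    refine ⟨g ⊔ δ ^ n • χ, hg.sup (hχ.smul hδn), fun x => ?_, ?_⟩
    · by_cases hx : δ ^ (n + 1) ≤ φ x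
      · refine le_max_of_le_left ?_
        simpa [h1 x hx] using hφg x
      · exact le_max_of_le_right (not_le.mp hx).le
    · rw [hu.map_sup _ _ hg (hχ.smul hδn), hu.map_smul _ hδn χ hχ, mul_max_of_nonneg _ _ hδ.1.le]
      refine max_le hgu ?_
      calc δ * (δ ^ n * u χ)
          ≤ δ ^ (n + 1) * (nuOf u {x | δ ^ (n + 1) ≤ φ x} + ε) := by
            rw [← mul_assoc, ← pow_succ']
            exact mul_le_mul_of_nonneg_left hχu.le hδn1.1.le
        _ = nuOf u {x | δ ^ (n + 1) ≤ φ x} * δ ^ (n + 1) + δ ^ (n + 1) * ε := by ring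
        _ ≤ s + ε := add_le_add (hs _ hδn1) (mul_le_of_le_one_left hε.le hδn1.2)

lemma mul_le_of_forall_nuOf_mul_le {δ : ℝ} (hδ : δ ∈ Ioo (0 : ℝ) 1) : δ * u φ ≤ s := by
  refine le_of_forall_pos_le_add fun ε hε => ?_
  have hpow : Tendsto (fun n : ℕ => δ * (δ ^ n * u (ContinuousMap.const X 1))) atTop (𝓝 0) := by
    simpa using ((tendsto_pow_atTop_nhds_zero_of_lt_one hδ.1.le hδ.2).mul_const
      (u (ContinuousMap.const X 1))).const_mul δ
  obtain ⟨n, hn⟩ := (hpow.eventually (gt_mem_nhds hε)).exists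
  obtain ⟨g, hg, hφg, hgu⟩ :=
    hu.exists_le_max_pow_of_forall_nuOf_mul_le hφ hs hδ hε n
  have hδn : δ ^ n ∈ Icc (0 : ℝ) 1 := ⟨pow_nonneg hδ.1.le n, pow_le_one₀ hδ.1.le hδ.2.le⟩
  calc δ * u φ ≤ δ * u (g ⊔ ContinuousMap.const X (δ ^ n)) :=
        mul_le_mul_of_nonneg_left (hu.mono hφ (hg.sup (.const hδn)) hφg) hδ.1.le
    _ = max (δ * u g) (δ * (δ ^ n * u (ContinuousMap.const X 1))) := by
        rw [hu.map_sup _ _ hg (.const hδn), hu.map_const hδn, mul_max_of_nonneg _ _ hδ.1.le]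
    _ ≤ s + ε :=
        max_le hgu (hn.le.trans (le_add_of_nonneg_left (hu.nonneg_of_forall_nuOf_mul_le hs)))

lemma le_of_forall_nuOf_mul_le : u φ ≤ s := by
  have hlim : Tendsto (fun δ : ℝ => δ * u φ) (𝓝[<] 1) (𝓝 (u φ)) := by
    simpa using (tendsto_nhdsWithin_of_tendsto_nhds (tendsto_id (x := 𝓝 (1 : ℝ)))).mul_const (u φ)
  refine le_of_tendsto hlim ?_
  filter_upwards [Ioo_mem_nhdsLT one_pos] with δ hδ
  exact hu.mul_le_of_forall_nuOf_mul_le hφ hs hδ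

omit hs in
theorem isLUB_nuOf_mul :
    IsLUB ((fun t => nuOf u {x | t ≤ φ x} * t) '' Ioc (0 : ℝ) 1) (u φ) :=
  ⟨by rintro _ ⟨t, ht, rfl⟩; exact hu.nuOf_mul_le hφ ht,
    fun _ hub => hu.le_of_forall_nuOf_mul_le hφ fun t ht => hub ⟨t, ht, rfl⟩⟩

end IsMaxitiveFunctional

end

theorem stmt16_general {X : Type*} [TopologicalSpace X]
    (u : C(X, ℝ) → ℝ)
    (h2 : ∀ l : ℝ, l ∈ Set.Icc (0:ℝ) 1 → ∀ φ : C(X, ℝ),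
      (∀ x, φ x ∈ Set.Icc (0:ℝ) 1) → u (l • φ) = l * u φ)
    (h3 : ∀ φ ψ : C(X, ℝ), (∀ x, φ x ∈ Set.Icc (0:ℝ) 1) → (∀ x, ψ x ∈ Set.Icc (0:ℝ) 1) →
      u (φ ⊔ ψ) = max (u φ) (u ψ)) :
    ∀ φ : C(X, ℝ), (∀ x, φ x ∈ Set.Icc (0:ℝ) 1) →
      sSup ((fun t => nuOf u {x : X | t ≤ φ x} * t) '' Set.Ioc (0:ℝ) 1) = u φ :=
  fun _ hφ => (IsMaxitiveFunctional.isLUB_nuOf_mul ⟨h2, h3⟩ hφ).csSup_eq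
    ((nonempty_Ioc.2 one_pos).image _)

/-- Every normalized, homogeneous, maxitive functional is represented by its induced
capacity via the max-product fuzzy integral. -/
theorem stmt16 {X : Type*} [TopologicalSpace X] [CompactSpace X] [T2Space X]
    (u : C(X, ℝ) → ℝ)
    (h1 : u (ContinuousMap.const X 1) = 1)
    (h2 : ∀ l : ℝ, l ∈ Set.Icc (0:ℝ) 1 → ∀ φ : C(X, ℝ),
      (∀ x, φ x ∈ Set.Icc (0:ℝ) 1) → u (l • φ) = l * u φ)
    (h3 : ∀ φ ψ : C(X, ℝ), (∀ x, φ x ∈ Set.Icc (0:ℝ) 1) → (∀ x, ψ x ∈ Set.Icc (0:ℝ) 1) →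
      u (φ ⊔ ψ) = max (u φ) (u ψ)) :
    ∀ φ : C(X, ℝ), (∀ x, φ x ∈ Set.Icc (0:ℝ) 1) →
      sSup ((fun t => nuOf u {x : X | t ≤ φ x} * t) '' Set.Ioc (0:ℝ) 1) = u φ :=
  stmt16_general u h2 h3
end

section
/- Let X be a compact Hausdorff space and ν, β two distinct possibility capacities on X. Then there exists φ ∈ C(X,I) such that sup{ν(φ^{-1}([s,1]))·s : s ∈ (0,1]} ≠ sup{β(φ^{-1}([s,1]))·s : s ∈ (0,1]}. That is, the map l : M_∪X → [0,1]^{C(X,I)} given by the max-product fuzzy integral is injective. -/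
open Set TopologicalSpace

lemma key_lt {X : Type*} [TopologicalSpace X] [CompactSpace X] [T2Space X]
    (ν β : Capacity X) {A : Set X} (hA : IsClosed A) (h : ν.toFun A < β.toFun A) :
    ∃ φ : X → ℝ, Continuous φ ∧ (∀ x, φ x ∈ Set.Icc (0:ℝ) 1) ∧ ups ν φ < ups β φ := by
  set a : ℝ := (ν.toFun A + β.toFun A) / 2 with ha
  have ha1 : ν.toFun A < a := by simp only [ha]; linarith
  have ha2 : a < β.toFun A := by simp only [ha]; linarith
  have ha0 : 0 ≤ a := by have := ν.nonneg A; linarith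
  obtain ⟨U, hU, hAU, hK⟩ := ν.usc hA ha1
  have hdisj : Disjoint Uᶜ A := by
    rw [Set.disjoint_compl_left_iff_subset]; exact hAU
  obtain ⟨f, hf0, hf1, hf01⟩ :=
    exists_continuous_zero_one_of_isClosed hU.isClosed_compl hA hdisj
  refine ⟨f, f.continuous, hf01, ?_⟩
  have hbdd : ∀ (g : Capacity X), BddAbove ((fun s => g.toFun {x : X | s ≤ f x} * s) '' Set.Ioc (0:ℝ) 1) := by
    intro g
    refine ⟨1, ?_⟩
    rintro y ⟨s, hs, rfl⟩
    exact mul_le_one₀ (g.le_one _) hs.1.le hs.2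
  have h1 : ups ν f ≤ a := by
    apply csSup_le
    · exact ⟨_, ⟨1, ⟨zero_lt_one, le_refl 1⟩, rfl⟩⟩
    · rintro y ⟨s, hs, rfl⟩
      have hcl : IsClosed {x : X | s ≤ f x} := isClosed_le continuous_const f.continuous
      have hsub : {x : X | s ≤ f x} ⊆ U := by
        intro x hx
        by_contra hxU
        have : f x = 0 := hf0 hxU
        have : (s : ℝ) ≤ 0 := by rw [← this]; exact hx
        linarith [hs.1]
      have hlt : ν.toFun {x : X | s ≤ f x} < a := hK hcl.isCompact hsub
      calc ν.toFun {x : X | s ≤ f x} * s ≤ a * s :=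
            mul_le_mul_of_nonneg_right hlt.le hs.1.le
        _ ≤ a * 1 := mul_le_mul_of_nonneg_left hs.2 ha0
        _ = a := mul_one a
  have h2 : β.toFun A ≤ ups β f := by
    have hmem : β.toFun {x : X | (1:ℝ) ≤ f x} * 1 ∈
        ((fun s => β.toFun {x : X | s ≤ f x} * s) '' Set.Ioc (0:ℝ) 1) :=
      ⟨1, ⟨zero_lt_one, le_refl 1⟩, rfl⟩
    have hAsub : A ⊆ {x : X | (1:ℝ) ≤ f x} := fun x hx => le_of_eq (hf1 hx).symm
    have hcl : IsClosed {x : X | (1:ℝ) ≤ f x} := isClosed_le continuous_const f.continuous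
    have := β.mono hA hcl hAsub
    calc β.toFun A ≤ β.toFun {x : X | (1:ℝ) ≤ f x} * 1 := by rw [mul_one]; exact this
      _ ≤ ups β f := le_csSup (hbdd β) hmem
  linarith

/-- The max-product fuzzy integral separates distinct possibility capacities. -/
theorem stmt17 {X : Type*} [TopologicalSpace X] [CompactSpace X] [T2Space X]
    (ν β : Capacity X) (hν : IsPossibility ν) (hβ : IsPossibility β)
    (hne : ∃ A : Set X, IsClosed A ∧ ν.toFun A ≠ β.toFun A) :
    ∃ φ : X → ℝ, Continuous φ ∧ (∀ x, φ x ∈ Set.Icc (0:ℝ) 1) ∧ ups ν φ ≠ ups β φ := by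
  obtain ⟨A, hA, hAne⟩ := hne
  rcases hAne.lt_or_gt with h | h
  · obtain ⟨φ, hc, hm, hlt⟩ := key_lt ν β hA h
    exact ⟨φ, hc, hm, hlt.ne⟩
  · obtain ⟨φ, hc, hm, hlt⟩ := key_lt β ν hA h
    exact ⟨φ, hc, hm, hlt.ne'⟩
end

section
/- Let X be a compact Hausdorff space and ν an upper-semicontinuous possibility capacity on X. Then for every nonempty closed A ⊆ X there exists a ∈ A with ν({a}) = ν(A); in particular the supremum ν(A) = sup{ν({x}) : x ∈ A} is attained. -/
open Set TopologicalSpace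

lemma possibility_finset_union {X : Type*} [TopologicalSpace X] (ν : Capacity X)
    (hν : IsPossibility ν) {ι : Type*} (s : Finset ι) (C : ι → Set X)
    (hC : ∀ i ∈ s, IsClosed (C i)) {b : ℝ} (hb : 0 < b)
    (h : ∀ i ∈ s, ν.toFun (C i) < b) :
    IsClosed (⋃ i ∈ s, C i) ∧ ν.toFun (⋃ i ∈ s, C i) < b := by
  classical
  induction s using Finset.induction with
  | empty => simpa [ν.empty'] using hb
  | @insert a s ha ih =>
    have hC' : ∀ i ∈ s, IsClosed (C i) := fun i hi => hC i (Finset.mem_insert_of_mem hi)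
    have h' : ∀ i ∈ s, ν.toFun (C i) < b := fun i hi => h i (Finset.mem_insert_of_mem hi)
    obtain ⟨hcl, hlt⟩ := ih hC' h'
    have hCa : IsClosed (C a) := hC a (Finset.mem_insert_self a s)
    rw [Finset.set_biUnion_insert]
    refine ⟨hCa.union hcl, ?_⟩
    rw [hν hCa hcl]
    exact max_lt (h a (Finset.mem_insert_self a s)) hlt

/-- A possibility capacity attains its value on every nonempty closed set at a point. -/
theorem stmt19 {X : Type*} [TopologicalSpace X] [CompactSpace X] [T2Space X]
    (ν : Capacity X) (hν : IsPossibility ν) :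
    ∀ A : Set X, IsClosed A → A.Nonempty → ∃ a ∈ A, ν.toFun {a} = ν.toFun A := by
  
  intro A hA hAne
  by_contra hcon
  push_neg at hcon
  have hlt : ∀ a ∈ A, ν.toFun {a} < ν.toFun A := fun a ha =>
    lt_of_le_of_ne (ν.mono isClosed_singleton hA (singleton_subset_iff.mpr ha)) (hcon a ha)
  obtain ⟨a0, ha0⟩ := hAne
  have hb : 0 < ν.toFun A := lt_of_le_of_lt (ν.nonneg {a0}) (hlt a0 ha0)
  -- choose open sets
  have hU : ∀ a : X, ∃ U : Set X, IsOpen U ∧ (a ∈ A → a ∈ U ∧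
      ∀ ⦃K : Set X⦄, IsCompact K → K ⊆ U → ν.toFun K < ν.toFun A) := by
    intro a
    by_cases ha : a ∈ A
    · obtain ⟨U, hUo, hUs, hUlt⟩ := ν.usc isClosed_singleton (hlt a ha)
      exact ⟨U, hUo, fun _ => ⟨hUs rfl, hUlt⟩⟩
    · exact ⟨Set.univ, isOpen_univ, fun h => absurd h ha⟩
  choose U hUo hUp using hU
  have hAcomp : IsCompact A := hA.isCompact
  obtain ⟨t, htA, htfin, htcov⟩ := hAcomp.elim_finite_subcover_image
    (fun a (_ : a ∈ A) => hUo a)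
    (fun x hx => Set.mem_biUnion hx ((hUp x hx).1))
  haveI : Fintype t := htfin.fintype
  -- shrinking lemma
  obtain ⟨v, hvcov, hv⟩ := exists_subset_iUnion_closure_subset hA
    (fun i : t => hUo i.1)
    (fun x _ => Set.toFinite _)
    (by
      intro x hx
      obtain ⟨i, hi, hxi⟩ := Set.mem_iUnion₂.mp (htcov hx)
      exact Set.mem_iUnion.mpr ⟨⟨i, hi⟩, hxi⟩)
  set C : t → Set X := fun i => A ∩ closure (v i) with hCdef
  have hCcl : ∀ i : t, IsClosed (C i) := fun i => hA.inter isClosed_closure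
  have hClt : ∀ i : t, ν.toFun (C i) < ν.toFun A := by
    intro i
    exact (hUp i.1 (htA i.2)).2 ((hCcl i).isCompact)
      (fun x hx => (hv.2 i) hx.2)
  have hAeq : A = ⋃ i, C i := by
    apply Set.Subset.antisymm
    · intro x hx
      obtain ⟨i, hxi⟩ := Set.mem_iUnion.mp (hvcov hx)
      exact Set.mem_iUnion.mpr ⟨i, hx, subset_closure hxi⟩
    · exact Set.iUnion_subset fun i => Set.inter_subset_left
  have := (possibility_finset_union ν hν Finset.univ C
    (fun i _ => hCcl i) hb (fun i _ => hClt i)).2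
  rw [show (⋃ i ∈ (Finset.univ : Finset t), C i) = ⋃ i, C i by simp, ← hAeq] at this
  exact lt_irrefl _ this
end
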